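/- arXiv:2111.04030 — 5 statements merged into one kernel-verified Lean document; each statement's English description precedes it below -/
import Mathlib

section
/- For any finite binary string x of length n and block lengths l, k with kl dividing n, the disjoint block entropy satisfies H^d_{kl}(x) ≤ H^d_l(x), i.e., (kl)·H^d_{kl}(x) ≤ k·(l·H^d_l(x)). -/
open MeasureTheory Filter Topology Real
open scoped ENNReal

noncomputable section

abbrev Cantor := ℕ → Bool

/-- `j`-fold left shift of a binary sequence. -/
def shiftk (x : Cantor) (j : ℕ) : Cantor := fun i => x (i + j)

/-- the left shift `T`. -/
def Tshift (x : Cantor) : Cantor := fun i => x (i + 1)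

/-- binary evaluation map `v`. -/
noncomputable def eval (x : Cantor) : ℝ := ∑' i : ℕ, if x i then ((2:ℝ) ^ (i + 1))⁻¹ else 0

noncomputable def negMulLog2 (p : ℝ) : ℝ := - p * Real.logb 2 p

/-- sliding count probability of a word `w` of length `l` in the prefix `x_0^{n-1}`. -/
noncomputable def slidingP (x : Cantor) (n l : ℕ) (w : Fin l → Bool) : ℝ :=
  (((Finset.range (n - l + 1)).filter (fun i => ∀ j : Fin l, x (i + (j : ℕ)) = w j)).card : ℝ)
    / ((n - l + 1 : ℕ) : ℝ)

/-- sliding block entropy `H_l(x_0^{n-1})`. -/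
noncomputable def slidingH (x : Cantor) (n l : ℕ) : ℝ :=
  (1 / (l : ℝ)) * ∑ w : Fin l → Bool, negMulLog2 (slidingP x n l w)

/-- disjoint block probability `P^d`. -/
noncomputable def disjP (x : Cantor) (n l : ℕ) (w : Fin l → Bool) : ℝ :=
  (((Finset.range (n / l)).filter (fun i => ∀ j : Fin l, x (l * i + (j : ℕ)) = w j)).card : ℝ)
    / ((n / l : ℕ) : ℝ)

/-- disjoint block entropy `H^d_l(x_0^{n-1})`. -/
noncomputable def disjH (x : Cantor) (n l : ℕ) : ℝ :=
  (1 / (l : ℝ)) * ∑ w : Fin l → Bool, negMulLog2 (disjP x n l w)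

/-- finite-state dimension via sliding block entropies. -/
noncomputable def dimFS (x : Cantor) : ℝ :=
  ⨅ l : ℕ, Filter.liminf (fun n => slidingH x n (l + 1)) Filter.atTop

/-- finite-state strong dimension. -/
noncomputable def DimFS (x : Cantor) : ℝ :=
  ⨅ l : ℕ, Filter.limsup (fun n => slidingH x n (l + 1)) Filter.atTop

/-- cylinder set. -/
def Cyl (l : ℕ) (w : Fin l → Bool) : Set Cantor := {y | ∀ j : Fin l, y (j : ℕ) = w j}

/-- empirical measures `ν_n = n⁻¹ ∑_{j<n} δ_{T^j x}` on Cantor space. -/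
noncomputable def empMeas (x : Cantor) (n : ℕ) : Measure Cantor :=
  (n : ℝ≥0∞)⁻¹ • ∑ j ∈ Finset.range n, Measure.dirac (shiftk x j)

/-- weak convergence of a sequence of measures. -/
def WeakConv {α : Type*} [TopologicalSpace α] [MeasurableSpace α]
    (ν : ℕ → Measure α) (μ : Measure α) : Prop :=
  ∀ f : BoundedContinuousFunction α ℂ,
    Tendsto (fun n => ∫ y, f y ∂(ν n)) atTop (nhds (∫ y, f y ∂μ))

/-- block entropy `H_n(μ)` of a measure on Cantor space. -/
noncomputable def measH (μ : Measure Cantor) (n : ℕ) : ℝ :=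
  ∑ w : Fin n → Bool, negMulLog2 ((μ (Cyl n w)).toReal)

/-- lower average entropy. -/
noncomputable def Hminus (μ : Measure Cantor) : ℝ :=
  Filter.liminf (fun n => measH μ n / n) Filter.atTop

/-- upper average entropy. -/
noncomputable def Hplus (μ : Measure Cantor) : ℝ :=
  Filter.limsup (fun n => measH μ n / n) Filter.atTop

/-- set of subsequence weak limits of the empirical measures of `x`. -/
def Wx (x : Cantor) : Set (Measure Cantor) :=
  {μ | IsProbabilityMeasure μ ∧
      ∃ φ : ℕ → ℕ, StrictMono φ ∧ (∀ m, 0 < φ m) ∧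
        WeakConv (fun m => empMeas x (φ m)) μ}

/-- normality of a binary sequence. -/
def IsNormal (x : Cantor) : Prop :=
  ∀ (l : ℕ) (w : Fin l → Bool),
    Tendsto (fun n => slidingP x n l w) atTop (nhds (((2:ℝ) ^ l)⁻¹))

/-- Weyl averages `(1/n) ∑_{j<n} e^{2πik v(T^j x)}`. -/
noncomputable def weylAvg (x : Cantor) (k : ℤ) (n : ℕ) : ℂ :=
  (n : ℂ)⁻¹ * ∑ j ∈ Finset.range n,
    Complex.exp (2 * (Real.pi : ℂ) * Complex.I * (k : ℂ) * ((eval (shiftk x j) : ℝ) : ℂ))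

/-- Weyl averages on the torus, `(1/n) ∑_{j<n} e^{2πik 2^j r}`. -/
noncomputable def weylAvgT (r : ℝ) (k : ℤ) (n : ℕ) : ℂ :=
  (n : ℂ)⁻¹ * ∑ j ∈ Finset.range n,
    Complex.exp (2 * (Real.pi : ℂ) * Complex.I * (k : ℂ) * (((2:ℝ) ^ j * r : ℝ) : ℂ))

/-- empirical measures `(1/n) ∑_{j<n} δ_{2^j r mod 1}` on the torus. -/
noncomputable def empMeasT (r : ℝ) (n : ℕ) : Measure UnitAddCircle :=
  (n : ℝ≥0∞)⁻¹ • ∑ j ∈ Finset.range n, Measure.dirac (((2:ℝ) ^ j * r : ℝ) : UnitAddCircle)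

/-- dyadic interval `[j/2^k, (j+1)/2^k)` on the torus. -/
def dyadicI (k j : ℕ) : Set UnitAddCircle :=
  (fun t : ℝ => (t : UnitAddCircle)) '' Set.Ico ((j : ℝ) / 2 ^ k) (((j : ℝ) + 1) / 2 ^ k)

/-- a real number is a dyadic rational. -/
def IsDyadic (t : ℝ) : Prop := ∃ (a : ℤ) (n : ℕ), t = (a : ℝ) / 2 ^ n

/-- value of a finite binary word. -/
noncomputable def val2 (l : ℕ) (w : Fin l → Bool) : ℝ :=
  ∑ j : Fin l, if w j then ((2:ℝ) ^ ((j : ℕ) + 1))⁻¹ else 0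

/-- dyadic interval `I_w` on the torus. -/
def IwT (l : ℕ) (w : Fin l → Bool) : Set UnitAddCircle :=
  (fun t : ℝ => (t : UnitAddCircle)) '' Set.Ico (val2 l w) (val2 l w + ((2:ℝ) ^ l)⁻¹)

/-- value of a finite base-`m` word. -/
noncomputable def valm (m n : ℕ) (w : Fin n → Fin m) : ℝ :=
  ∑ j : Fin n, ((w j : ℕ) : ℝ) / (m : ℝ) ^ ((j : ℕ) + 1)

/-- base-`m` interval `I^m_w` on the torus. -/
def ImT (m n : ℕ) (w : Fin n → Fin m) : Set UnitAddCircle :=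
  (fun t : ℝ => (t : UnitAddCircle)) '' Set.Ico (valm m n w) (valm m n w + ((m : ℝ) ^ n)⁻¹)

/-- base-`m` partition entropy `H^m_n(μ)` (natural logarithm). -/
noncomputable def measHT (μ : Measure UnitAddCircle) (m n : ℕ) : ℝ :=
  ∑ w : Fin n → Fin m, Real.negMulLog ((μ (ImT m n w)).toReal)

/-- lower Rényi dimension w.r.t. partition factor `m`. -/
noncomputable def renyiLower (μ : Measure UnitAddCircle) (m : ℕ) : ℝ :=
  Filter.liminf (fun n => measHT μ m n / (n * Real.log m)) Filter.atTop

/-- upper Rényi dimension w.r.t. partition factor `m`. -/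
noncomputable def renyiUpper (μ : Measure UnitAddCircle) (m : ℕ) : ℝ :=
  Filter.limsup (fun n => measHT μ m n / (n * Real.log m)) Filter.atTop

/-!
Read each block of length `k * l` as `k` consecutive blocks of length `l`, and let `R` be the
empirical distribution of all `l`-blocks. By Gibbs' inequality, the entropy of the distribution `P`
of `k * l`-blocks is at most its cross entropy with the product measure `R ⊗ ⋯ ⊗ R`, which splits
into `k` cross entropies of the sub-block distributions at the positions `t < k` with `R`. These
sub-block distributions average to `R` itself, so the `k` terms add up to `k · H(R)`.
-/

open Finset

theorem Real.negMulLog_le_neg_mul_log_add_sub {p q : ℝ} (hp : 0 ≤ p) (hq : 0 ≤ q)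
    (hpq : p ≠ 0 → q ≠ 0) : negMulLog p ≤ -p * log q + (q - p) := by
  rcases hp.eq_or_lt with rfl | hp
  · simpa using hq
  have hq : 0 < q := hq.lt_of_ne' (hpq hp.ne')
  have hlog := log_le_sub_one_of_pos (div_pos hq hp)
  rw [log_div hq.ne' hp.ne'] at hlog
  have hkey : p * (log q - log p) ≤ q - p :=
    calc p * (log q - log p) ≤ p * (q / p - 1) := mul_le_mul_of_nonneg_left hlog hp.le
      _ = q - p := by field_simp
  rw [negMulLog]
  linarith

theorem Real.sum_negMulLog_le_sum_neg_mul_log {ι : Type*} [Fintype ι] {p q : ι → ℝ}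
    (hp : ∀ i, 0 ≤ p i) (hq : ∀ i, 0 ≤ q i) (hpq : ∀ i, p i ≠ 0 → q i ≠ 0)
    (hsum : ∑ i, q i ≤ ∑ i, p i) :
    ∑ i, negMulLog (p i) ≤ ∑ i, -p i * log (q i) := by
  calc ∑ i, negMulLog (p i) ≤ ∑ i, (-p i * log (q i) + (q i - p i)) :=
        sum_le_sum fun i _ => negMulLog_le_neg_mul_log_add_sub (hp i) (hq i) (hpq i)
    _ = ∑ i, -p i * log (q i) + (∑ i, q i - ∑ i, p i) := by
        rw [sum_add_distrib, sum_sub_distrib]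
    _ ≤ ∑ i, -p i * log (q i) := by linarith

theorem Finset.sum_range_mul_eq_sum_sum {M : Type*} [AddCommMonoid M] (f : ℕ → M) (k m : ℕ) :
    ∑ j ∈ range (k * m), f j = ∑ i ∈ range m, ∑ t : Fin k, f (k * i + t) := by
  induction m with
  | zero => simp
  | succ m ih => rw [Nat.mul_succ, sum_range_add, ih, sum_range_succ,
      Fin.sum_univ_eq_sum_range (fun t => f (k * m + t))]

section EmpiricalDist

variable {β γ : Type*} [DecidableEq β]

def empiricalDist (g : ℕ → β) (N : ℕ) (b : β) : ℝ :=
  #{i ∈ range N | g i = b} / N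

theorem empiricalDist_nonneg (g : ℕ → β) (N : ℕ) (b : β) : 0 ≤ empiricalDist g N b := by
  unfold empiricalDist
  positivity

theorem empiricalDist_ne_zero_iff {g : ℕ → β} {N : ℕ} {b : β} :
    empiricalDist g N b ≠ 0 ↔ ∃ i < N, g i = b := by
  simp only [empiricalDist, ne_eq, div_eq_zero_iff, Nat.cast_eq_zero, card_eq_zero, not_or,
    ← nonempty_iff_ne_empty, filter_nonempty_iff, mem_range]
  constructor
  · exact fun h => h.1
  · rintro ⟨i, hi, hgi⟩
    exact ⟨⟨i, hi, hgi⟩, by omega⟩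

theorem empiricalDist_comp_equiv [DecidableEq γ] (e : β ≃ γ) (g : ℕ → β) (N : ℕ) (b : β) :
    empiricalDist (e ∘ g) N (e b) = empiricalDist g N b := by
  simp only [empiricalDist, Function.comp_apply, e.apply_eq_iff_eq]

variable [Fintype β]

theorem sum_negMulLog_empiricalDist_comp_equiv [Fintype γ] [DecidableEq γ] (e : β ≃ γ)
    (g : ℕ → β) (N : ℕ) :
    ∑ c, negMulLog (empiricalDist (e ∘ g) N c) = ∑ b, negMulLog (empiricalDist g N b) := by
  rw [← e.sum_comp]
  simp only [empiricalDist_comp_equiv]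

theorem sum_empiricalDist_mul (g : ℕ → β) (N : ℕ) (c : β → ℝ) :
    ∑ b, empiricalDist g N b * c b = (∑ i ∈ range N, c (g i)) / N := by
  simp only [empiricalDist, div_mul_eq_mul_div, ← sum_div]
  rw [← sum_fiberwise (range N) g (fun i => c (g i))]
  refine congrArg (· / _) (sum_congr rfl fun b _ => ?_)
  rw [sum_congr rfl fun i hi => by rw [(mem_filter.1 hi).2], sum_const, nsmul_eq_mul]

theorem sum_empiricalDist_le_one (g : ℕ → β) (N : ℕ) : ∑ b, empiricalDist g N b ≤ 1 := by
  have h := sum_empiricalDist_mul g N 1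
  simp only [Pi.one_apply, mul_one, sum_const, card_range, nsmul_eq_mul] at h
  exact h.trans_le (div_self_le_one _)

theorem sum_empiricalDist_of_pos (g : ℕ → β) {N : ℕ} (hN : 0 < N) :
    ∑ b, empiricalDist g N b = 1 := by
  simpa [hN.ne'] using sum_empiricalDist_mul g N 1

end EmpiricalDist

section Blocks

variable {α : Type*} [Fintype α] [DecidableEq α] {k : ℕ} {G : ℕ → Fin k → α} {g : ℕ → α}

theorem sum_empiricalDist_blocks_mul_sum (hG : ∀ i t, G i t = g (k * i + t)) (m : ℕ)
    (c : α → ℝ) :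
    ∑ f, empiricalDist G m f * ∑ t, c (f t) = k * ∑ a, empiricalDist g (k * m) a * c a := by
  rw [sum_empiricalDist_mul, sum_empiricalDist_mul]
  simp only [hG, ← sum_range_mul_eq_sum_sum (fun j => c (g j))]
  rcases eq_or_ne k 0 with rfl | hk
  · simp
  · push_cast
    field_simp

theorem sum_negMulLog_empiricalDist_blocks_le (hG : ∀ i t, G i t = g (k * i + t)) (m : ℕ) :
    ∑ f, negMulLog (empiricalDist G m f) ≤ k * ∑ a, negMulLog (empiricalDist g (k * m) a) := by
  rcases m.eq_zero_or_pos with rfl | hm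
  · simp [empiricalDist]
  set R := empiricalDist g (k * m)
  have hsupp : ∀ f, empiricalDist G m f ≠ 0 → ∀ t, R (f t) ≠ 0 := by
    intro f hf t
    obtain ⟨i, hi, rfl⟩ := empiricalDist_ne_zero_iff.1 hf
    rw [hG]
    refine empiricalDist_ne_zero_iff.2 ⟨_, ?_, rfl⟩
    calc k * i + t < k * i + k := Nat.add_lt_add_left t.isLt _
      _ = k * (i + 1) := (Nat.mul_succ k i).symm
      _ ≤ k * m := Nat.mul_le_mul_left k hi
  calc ∑ f, negMulLog (empiricalDist G m f)
      ≤ ∑ f, -empiricalDist G m f * log (∏ t, R (f t)) := by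
        refine sum_negMulLog_le_sum_neg_mul_log (empiricalDist_nonneg G m)
          (fun f => prod_nonneg fun t _ => empiricalDist_nonneg _ _ _)
          (fun f hf => prod_ne_zero_iff.2 fun t _ => hsupp f hf t) ?_
        rw [← Fintype.sum_pow, sum_empiricalDist_of_pos G hm]
        exact pow_le_one₀ (sum_nonneg fun a _ => empiricalDist_nonneg _ _ _)
          (sum_empiricalDist_le_one g _)
    _ = ∑ f, empiricalDist G m f * ∑ t, -log (R (f t)) := by
        refine sum_congr rfl fun f _ => ?_
        by_cases hf : empiricalDist G m f = 0
        · simp [hf]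
        · rw [log_prod fun t _ => hsupp f hf t, sum_neg_distrib]
          ring
    _ = k * ∑ a, R a * -log (R a) := sum_empiricalDist_blocks_mul_sum hG m fun a => -log (R a)
    _ = k * ∑ a, negMulLog (R a) := by simp only [negMulLog, mul_neg, neg_mul]

end Blocks

def blockWord (x : Cantor) (l i : ℕ) : Fin l → Bool := fun j => x (l * i + j)

theorem disjP_eq_empiricalDist (x : Cantor) (n l : ℕ) (w : Fin l → Bool) :
    disjP x n l w = empiricalDist (blockWord x l) (n / l) w := by
  simp only [disjP, empiricalDist, blockWord, funext_iff]

theorem negMulLog2_eq_negMulLog_div (p : ℝ) : negMulLog2 p = negMulLog p / log 2 := by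
  rw [negMulLog2, negMulLog, logb, mul_div_assoc]

theorem natCast_mul_disjH (x : Cantor) (n l : ℕ) :
    (l : ℝ) * disjH x n l = (∑ w, negMulLog (disjP x n l w)) / log 2 := by
  rcases eq_or_ne l 0 with rfl | hl
  · simp [disjP]
  · simp only [disjH, negMulLog2_eq_negMulLog_div, ← sum_div]
    field_simp

-- Letter `j + l * t` of the long word becomes letter `j` of its `t`-th subword.
def splitWord (α : Type*) (k l : ℕ) : (Fin (k * l) → α) ≃ (Fin k → Fin l → α) :=
  (Equiv.arrowCongr finProdFinEquiv.symm (Equiv.refl α)).trans (Equiv.curry _ _ _)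

theorem splitWord_blockWord (x : Cantor) (k l i : ℕ) (t : Fin k) :
    splitWord Bool k l (blockWord x (k * l) i) t = blockWord x l (k * i + t) := by
  funext j
  show x (k * l * i + ((j : ℕ) + l * t)) = x (l * (k * i + t) + j)
  congr 1
  ring

theorem disjoint_block_entropy_subadditive_general
    (x : Cantor) (n l k : ℕ) (hdvd : k * l ∣ n) :
    ((k * l : ℕ) : ℝ) * disjH x n (k * l) ≤ (k : ℝ) * ((l : ℝ) * disjH x n l) := by
  have hblocks : n / l = k * (n / (k * l)) := by
    rw [mul_comm k l, ← Nat.div_div_eq_div_mul,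
      Nat.mul_div_cancel' (Nat.dvd_div_of_mul_dvd (mul_comm k l ▸ hdvd))]
  rw [natCast_mul_disjH, natCast_mul_disjH, ← mul_div_assoc,
    div_le_div_iff_of_pos_right (log_pos one_lt_two)]
  simp only [disjP_eq_empiricalDist, hblocks]
  rw [← sum_negMulLog_empiricalDist_comp_equiv (splitWord Bool k l)]
  exact sum_negMulLog_empiricalDist_blocks_le (splitWord_blockWord x k l) _

/-- (kl)·H^d_{kl}(x_0^{n-1}) ≤ k·(l·H^d_l(x_0^{n-1})) when kl ∣ n. -/
theorem disjoint_block_entropy_subadditive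
    (x : Cantor) (n l k : ℕ) (hl : 0 < l) (hk : 0 < k) (hdvd : k * l ∣ n) :
    ((k * l : ℕ) : ℝ) * disjH x n (k * l) ≤ (k : ℝ) * ((l : ℝ) * disjH x n l) :=
  disjoint_block_entropy_subadditive_general x n l k hdvd

end
end

section
/- For any x ∈ {0,1}^∞ and positive integers l, m, the sliding block entropies satisfy (l+m)·H_{l+m}(x_0^{n-1}) ≤ l·H_l(x_0^{n-1}) + m·H_m(x_0^{n-1}) + o(n)/n, where the error term tends to 0 as n → ∞ at a rate depending only on l and m. -/
open MeasureTheory Filter Topology Real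
open scoped ENNReal

noncomputable section

/-! Read each window of length `l + m` as the pair (first `l` letters, last `m` letters).
The `(l+m)`-block frequencies are then a joint distribution whose marginals differ from the
`l`- and `m`-block frequencies only through the at most `l + m` windows near the ends of
`x_0^{n-1}`, so by at most `(l+m)/(n-l-m+1)`. Shannon subadditivity bounds the joint entropy by
the entropies of the marginals, and the modulus of continuity `δ ↦ -δ log δ + δ` of
`t ↦ -t log t` on `[0,1]` turns the closeness of the marginals into an error that depends only
on `l`, `m` and `n`. -/

open Finset

namespace Real

lemma negMulLog_add_le {p d : ℝ} (hp : 0 ≤ p) (hd : 0 ≤ d) :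
    negMulLog (p + d) ≤ negMulLog p + negMulLog d := by
  rcases hp.eq_or_lt with rfl | hp
  · simp
  rcases hd.eq_or_lt with rfl | hd
  · simp
  have h1 : p * log p ≤ p * log (p + d) :=
    mul_le_mul_of_nonneg_left (log_le_log hp (by linarith)) hp.le
  have h2 : d * log d ≤ d * log (p + d) :=
    mul_le_mul_of_nonneg_left (log_le_log hd (by linarith)) hd.le
  simp only [negMulLog]
  linarith

lemma negMulLog_le_negMulLog_add_add {p d : ℝ} (hp : 0 ≤ p) (hd : 0 ≤ d) (h1 : p + d ≤ 1) :
    negMulLog p ≤ negMulLog (p + d) + d := by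
  rcases hp.eq_or_lt with rfl | hp
  · rw [zero_add] at h1 ⊢
    linarith [negMulLog_zero, negMulLog_nonneg hd h1]
  have hlog : log (p + d) - log p ≤ (p + d) / p - 1 := by
    rw [← log_div (by positivity) hp.ne']
    exact log_le_sub_one_of_pos (by positivity)
  have hmul : p * (log (p + d) - log p) ≤ d := by
    calc p * (log (p + d) - log p) ≤ p * ((p + d) / p - 1) :=
          mul_le_mul_of_nonneg_left hlog hp.le
      _ = d := by field_simp; ring
  have hd_log : d * log (p + d) ≤ 0 :=
    mul_nonpos_of_nonneg_of_nonpos hd (log_nonpos (by linarith) h1)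
  simp only [negMulLog]
  linarith

/-- `t ↦ -t log t + t` has derivative `-log t ≥ 0` on `(0, 1]`. -/
lemma negMulLog_add_self_le {d δ : ℝ} (hd : 0 ≤ d) (hdδ : d ≤ δ) (hδ : δ ≤ 1) :
    negMulLog d + d ≤ negMulLog δ + δ := by
  rcases hd.eq_or_lt with rfl | hd
  · linarith [negMulLog_zero, negMulLog_nonneg hdδ hδ]
  have hδ0 : 0 < δ := hd.trans_le hdδ
  have hlog : log δ - log d ≤ δ / d - 1 := by
    rw [← log_div hδ0.ne' hd.ne']
    exact log_le_sub_one_of_pos (by positivity)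
  have hmul : d * (log δ - log d) ≤ δ - d := by
    calc d * (log δ - log d) ≤ d * (δ / d - 1) := mul_le_mul_of_nonneg_left hlog hd.le
      _ = δ - d := by field_simp
  have hδ_log : (δ - d) * log δ ≤ 0 :=
    mul_nonpos_of_nonneg_of_nonpos (by linarith) (log_nonpos hδ0.le hδ)
  simp only [negMulLog]
  linarith

lemma negMulLog_le_of_abs_sub_le {p q δ : ℝ} (hp : p ∈ Set.Icc (0 : ℝ) 1)
    (hq : q ∈ Set.Icc (0 : ℝ) 1) (hpq : |p - q| ≤ δ) (hδ : δ ≤ 1) :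
    negMulLog p ≤ negMulLog q + (negMulLog δ + δ) := by
  obtain ⟨hp0, hp1⟩ := hp
  obtain ⟨hq0, hq1⟩ := hq
  obtain ⟨hpqδ, hqpδ⟩ := abs_le.1 hpq
  rcases le_total q p with hqp | hpq'
  · have hmod := negMulLog_add_self_le (sub_nonneg.2 hqp) hqpδ hδ
    have hsub := negMulLog_add_le hq0 (sub_nonneg.2 hqp)
    rw [add_sub_cancel] at hsub
    linarith
  · have hmod := negMulLog_add_self_le (sub_nonneg.2 hpq') (by linarith) hδ
    have hdrop := negMulLog_le_negMulLog_add_add hp0 (sub_nonneg.2 hpq') (by linarith)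
    rw [add_sub_cancel] at hdrop
    have := negMulLog_nonneg (sub_nonneg.2 hpq') (by linarith)
    linarith

end Real

variable {ι α β : Type*}

lemma sum_negMulLog_le_of_abs_sub_le [Fintype α] {f g : α → ℝ} {δ : ℝ}
    (hf : ∀ a, f a ∈ Set.Icc (0 : ℝ) 1) (hg : ∀ a, g a ∈ Set.Icc (0 : ℝ) 1)
    (hfg : ∀ a, |f a - g a| ≤ δ) (hδ : δ ≤ 1) :
    ∑ a, negMulLog (f a) ≤ ∑ a, negMulLog (g a) + Fintype.card α * (negMulLog δ + δ) := by
  calc ∑ a, negMulLog (f a) ≤ ∑ a, (negMulLog (g a) + (negMulLog δ + δ)) :=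
        sum_le_sum fun a _ => negMulLog_le_of_abs_sub_le (hf a) (hg a) (hfg a) hδ
    _ = _ := by rw [sum_add_distrib, sum_const, card_univ, nsmul_eq_mul]

/-- Gibbs' inequality `∑ Q log (A B / Q) ≤ ∑ (A B - Q) = 0`, with `A`, `B` the marginals
of `Q`. -/
lemma sum_sum_negMulLog_le_marginals [Fintype α] [Fintype β] (Q : α → β → ℝ)
    (hQ : ∀ a b, 0 ≤ Q a b) (hsum : ∑ a, ∑ b, Q a b = 1) :
    ∑ a, ∑ b, negMulLog (Q a b) ≤
      ∑ a, negMulLog (∑ b, Q a b) + ∑ b, negMulLog (∑ a, Q a b) := by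
  set A : α → ℝ := fun a => ∑ b, Q a b
  set B : β → ℝ := fun b => ∑ a, Q a b
  have hAB : ∀ a b, negMulLog (Q a b) ≤
      Q a b * -log (A a) + Q a b * -log (B b) + (A a * B b - Q a b) := by
    intro a b
    rcases (hQ a b).eq_or_lt with h | h
    · rw [← h, negMulLog_zero]
      have hA : 0 ≤ A a := sum_nonneg fun b _ => hQ a b
      have hB : 0 ≤ B b := sum_nonneg fun a _ => hQ a b
      simpa using mul_nonneg hA hB
    have hA : 0 < A a := h.trans_le (single_le_sum (fun b _ => hQ a b) (mem_univ b))
    have hB : 0 < B b := h.trans_le (single_le_sum (fun a _ => hQ a b) (mem_univ a))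
    have hlog : log (A a) + log (B b) - log (Q a b) ≤ A a * B b / Q a b - 1 := by
      rw [← log_mul hA.ne' hB.ne', ← log_div (by positivity) h.ne']
      exact log_le_sub_one_of_pos (by positivity)
    have hmul := mul_le_mul_of_nonneg_left hlog h.le
    rw [show Q a b * (A a * B b / Q a b - 1) = A a * B b - Q a b by field_simp] at hmul
    simp only [negMulLog]
    linarith
  have hA : ∑ a, ∑ b, Q a b * -log (A a) = ∑ a, negMulLog (A a) := by
    simp only [negMulLog, neg_mul, mul_neg, sum_neg_distrib, ← sum_mul, A]
  have hB : ∑ a, ∑ b, Q a b * -log (B b) = ∑ b, negMulLog (B b) := by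
    rw [sum_comm]
    simp only [negMulLog, neg_mul, mul_neg, sum_neg_distrib, ← sum_mul, B]
  have hprod : ∑ a, ∑ b, A a * B b = 1 := by
    rw [← sum_mul_sum, hsum, show ∑ b, B b = 1 by rw [← hsum, sum_comm], one_mul]
  calc ∑ a, ∑ b, negMulLog (Q a b)
      ≤ ∑ a, ∑ b, (Q a b * -log (A a) + Q a b * -log (B b) + (A a * B b - Q a b)) :=
        sum_le_sum fun a _ => sum_le_sum fun b _ => hAB a b
    _ = ∑ a, negMulLog (A a) + ∑ b, negMulLog (B b) := by
        simp only [sum_add_distrib, sum_sub_distrib, hA, hB, hprod]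
        rw [show ∑ a, ∑ b, Q a b = 1 from hsum]
        ring

def empFreq [DecidableEq α] (s : Finset ι) (f : ι → α) (a : α) : ℝ :=
  #{i ∈ s | f i = a} / #s

section empFreq

variable [DecidableEq α] [DecidableEq β] (s : Finset ι)

lemma empFreq_mem_Icc (f : ι → α) (a : α) : empFreq s f a ∈ Set.Icc (0 : ℝ) 1 :=
  ⟨by unfold empFreq; positivity,
    div_le_one_of_le₀ (by exact_mod_cast card_filter_le _ _) (by positivity)⟩

lemma abs_empFreq_sub_empFreq_le_one {κ : Type*} (t : Finset κ) (f : ι → α) (g : κ → α)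
    (a b : α) : |empFreq s f a - empFreq t g b| ≤ 1 :=
  abs_sub_le_of_nonneg_of_le (empFreq_mem_Icc ..).1 (empFreq_mem_Icc ..).2
    (empFreq_mem_Icc ..).1 (empFreq_mem_Icc ..).2

lemma sum_empFreq [Fintype α] (hs : s.Nonempty) (f : ι → α) : ∑ a, empFreq s f a = 1 := by
  simp only [empFreq, ← sum_div]
  rw [← Nat.cast_sum, ← card_eq_sum_card_fiberwise fun i _ => mem_univ (f i)]
  exact div_self (by exact_mod_cast hs.card_pos.ne')

lemma empFreq_comp_of_injective {f : ι → α} {e : α → β} (he : e.Injective) (a : α) :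
    empFreq s (e ∘ f) (e a) = empFreq s f a := by
  simp only [empFreq, Function.comp_apply, he.eq_iff]

lemma empFreq_map {κ : Type*} (e : ι ↪ κ) (f : κ → α) (a : α) :
    empFreq (s.map e) f a = empFreq s (f ∘ e) a := by
  simp only [empFreq, filter_map, card_map]
  rfl

lemma sum_empFreq_prodMk_right [Fintype β] (g : ι → α) (h : ι → β) (a : α) :
    ∑ b, empFreq s (fun i => (g i, h i)) (a, b) = empFreq s g a := by
  simp only [empFreq, ← sum_div, Prod.mk.injEq, ← filter_filter]
  rw [← Nat.cast_sum, ← card_eq_sum_card_fiberwise fun i _ => mem_univ (h i)]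

lemma sum_empFreq_prodMk_left [Fintype α] (g : ι → α) (h : ι → β) (b : β) :
    ∑ a, empFreq s (fun i => (g i, h i)) (a, b) = empFreq s h b := by
  simp only [empFreq, ← sum_div, Prod.mk.injEq, and_comm (a := g _ = _), ← filter_filter]
  rw [← Nat.cast_sum, ← card_eq_sum_card_fiberwise fun i _ => mem_univ (g i)]

lemma sum_negMulLog_empFreq_prodMk_le [Fintype α] [Fintype β] (hs : s.Nonempty)
    (g : ι → α) (h : ι → β) :
    ∑ p, negMulLog (empFreq s (fun i => (g i, h i)) p) ≤
      ∑ a, negMulLog (empFreq s g a) + ∑ b, negMulLog (empFreq s h b) := by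
  have hsum : ∑ a, ∑ b, empFreq s (fun i => (g i, h i)) (a, b) = 1 := by
    rw [← Fintype.sum_prod_type', sum_empFreq s hs]
  have := sum_sum_negMulLog_le_marginals (fun a b => empFreq s (fun i => (g i, h i)) (a, b))
    (fun a b => (empFreq_mem_Icc _ _ _).1) hsum
  simpa only [Fintype.sum_prod_type, sum_empFreq_prodMk_right, sum_empFreq_prodMk_left]
    using this

lemma abs_empFreq_sub_le_of_subset {s t : Finset ι} (hs : s.Nonempty) (hst : s ⊆ t) {k : ℕ}
    (hk : #t ≤ #s + k) (f : ι → α) (a : α) :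
    |empFreq s f a - empFreq t f a| ≤ k / #s := by
  classical
  have hsa : #{i ∈ s | f i = a} ≤ #{i ∈ t | f i = a} :=
    card_le_card (filter_subset_filter _ hst)
  have hta : #{i ∈ t | f i = a} ≤ #{i ∈ s | f i = a} + k :=
    calc #{i ∈ t | f i = a} ≤ #({i ∈ s | f i = a} ∪ (t \ s)) :=
          card_le_card fun i => by simp only [mem_filter, mem_union, Finset.mem_sdiff]; tauto
      _ ≤ #{i ∈ s | f i = a} + #(t \ s) := card_union_le _ _
      _ ≤ #{i ∈ s | f i = a} + k := by rw [card_sdiff_of_subset hst]; omega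
  have hsS := card_filter_le s (f · = a)
  have hst' := card_le_card hst
  have hS : (0 : ℝ) < #s := by exact_mod_cast hs.card_pos
  have hA : (0 : ℝ) ≤ #{i ∈ s | f i = a} := Nat.cast_nonneg _
  unfold empFreq
  rify at hsa hta hsS hst' hk
  generalize (#{i ∈ s | f i = a} : ℝ) = A at *
  generalize (#{i ∈ t | f i = a} : ℝ) = C at *
  generalize (#s : ℝ) = S at *
  generalize (#t : ℝ) = T at *
  have hT : 0 < T := hS.trans_le hst'
  have hk0 : (0 : ℝ) ≤ k := by positivity
  have h₁ : A * T - S * C ≤ k * T := by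
    nlinarith [mul_le_mul_of_nonneg_left hsa hS.le,
      mul_le_mul_of_nonneg_left (sub_le_iff_le_add'.2 hk) hA,
      mul_le_mul_of_nonneg_right hsS hk0, mul_le_mul_of_nonneg_right hst' hk0]
  have h₂ : C * S - T * A ≤ k * T := by
    nlinarith [mul_le_mul_of_nonneg_left hta hS.le, mul_le_mul_of_nonneg_left hst' hA,
      mul_le_mul_of_nonneg_right hst' hk0]
  rw [abs_sub_le_iff, div_sub_div _ _ hS.ne' hT.ne', div_sub_div _ _ hT.ne' hS.ne',
    div_le_div_iff₀ (by positivity) hS, div_le_div_iff₀ (by positivity) hS]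
  constructor <;> nlinarith

end empFreq

def window (x : Cantor) (i k : ℕ) : Fin k → Bool := fun j => x (i + j)

lemma window_add (x : Cantor) (i l m : ℕ) :
    window x i (l + m) = Fin.append (window x i l) (window x (i + l) m) := by
  funext j
  refine Fin.addCases (fun j => ?_) (fun j => ?_) j <;> simp [window, add_assoc]

lemma slidingP_eq_empFreq (x : Cantor) (n k : ℕ) (w : Fin k → Bool) :
    slidingP x n k w = empFreq (range (n - k + 1)) (window x · k) w := by
  simp only [slidingP, empFreq, window, funext_iff, card_range]

lemma sum_slidingP (x : Cantor) (n k : ℕ) : ∑ w, slidingP x n k w = 1 := by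
  simp only [slidingP_eq_empFreq]
  exact sum_empFreq _ (nonempty_range_iff.2 (Nat.succ_ne_zero _)) _

lemma natCast_mul_slidingH (x : Cantor) (n k : ℕ) :
    (k : ℝ) * slidingH x n k = ∑ w, negMulLog (slidingP x n k w) / log 2 := by
  have hlog (p : ℝ) : negMulLog2 p = negMulLog p / log 2 := by
    rw [negMulLog2, logb, negMulLog, mul_div_assoc]
  rcases k.eq_zero_or_pos with rfl | hk
  · have h1 := sum_slidingP x n 0
    rw [Fintype.sum_unique] at h1
    simp [h1]
  · rw [slidingH, ← mul_assoc, mul_one_div_cancel (by positivity), one_mul]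
    simp only [hlog]

def windowDefect (k n : ℕ) : ℝ := min 1 (k / (n - k + 1 : ℕ))

lemma tendsto_windowDefect (k : ℕ) : Tendsto (windowDefect k) atTop (𝓝 0) := by
  have hN : Tendsto (fun n : ℕ => ((n - k + 1 : ℕ) : ℝ)) atTop atTop :=
    tendsto_natCast_atTop_atTop.comp <|
      (tendsto_add_atTop_nat 1).comp (tendsto_sub_atTop_nat k)
  refine tendsto_of_tendsto_of_tendsto_of_le_of_le tendsto_const_nhds
    (tendsto_const_nhds.div_atTop hN) (fun n => le_min zero_le_one (by positivity))
    (fun n => min_le_right _ _)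

lemma abs_empFreq_prefix_sub_slidingP_le (x : Cantor) (n l m : ℕ) (u : Fin l → Bool) :
    |empFreq (range (n - (l + m) + 1)) (window x · l) u - slidingP x n l u| ≤
      windowDefect (l + m) n := by
  rw [slidingP_eq_empFreq]
  refine le_min (abs_empFreq_sub_empFreq_le_one ..) ?_
  refine (abs_empFreq_sub_le_of_subset (nonempty_range_iff.2 (Nat.succ_ne_zero _))
    (range_mono (by omega)) (k := l + m) ?_ _ _).trans_eq (by simp)
  simp only [card_range]
  omega

lemma abs_empFreq_suffix_sub_slidingP_le (x : Cantor) (n l m : ℕ) (v : Fin m → Bool) :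
    |empFreq (range (n - (l + m) + 1)) (fun i => window x (i + l) m) v - slidingP x n m v| ≤
      windowDefect (l + m) n := by
  rw [slidingP_eq_empFreq]
  refine le_min (abs_empFreq_sub_empFreq_le_one ..) ?_
  by_cases hn : l + m ≤ n
  · rw [show (fun i => window x (i + l) m) = (window x · m) ∘ addRightEmbedding l from rfl,
      ← empFreq_map]
    refine (abs_empFreq_sub_le_of_subset (nonempty_range_iff.2 (Nat.succ_ne_zero _)).map ?_
      (k := l + m) ?_ _ _).trans_eq (by simp)
    · intro i hi
      obtain ⟨j, hj, rfl⟩ := Finset.mem_map.1 hi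
      simp only [mem_range, addRightEmbedding_apply] at hj ⊢
      omega
    · simp only [card_map, card_range]
      omega
  · have hN : n - (l + m) + 1 = 1 := by omega
    refine (abs_empFreq_sub_empFreq_le_one ..).trans ?_
    rw [hN, Nat.cast_one, div_one, Nat.one_le_cast]
    omega

lemma sum_negMulLog_slidingP_add_le (x : Cantor) (n l m : ℕ) :
    ∑ w, negMulLog (slidingP x n (l + m) w) ≤
      ∑ u, negMulLog (slidingP x n l u) + ∑ v, negMulLog (slidingP x n m v) +
        (2 ^ l + 2 ^ m) * (negMulLog (windowDefect (l + m) n) + windowDefect (l + m) n) := by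
  set s := range (n - (l + m) + 1)
  set δ := windowDefect (l + m) n
  have hjoint : ∑ w, negMulLog (slidingP x n (l + m) w) =
      ∑ p, negMulLog (empFreq s (fun i => (window x i l, window x (i + l) m)) p) := by
    simp only [slidingP_eq_empFreq, funext (window_add x · l m)]
    rw [← (Fin.appendEquiv l m).sum_comp]
    exact sum_congr rfl fun p _ => by
      rw [← empFreq_comp_of_injective s (Fin.appendEquiv l m).injective]
      rfl
  have hδ : δ ≤ 1 := min_le_left _ _
  calc ∑ w, negMulLog (slidingP x n (l + m) w)
      ≤ ∑ u, negMulLog (empFreq s (window x · l) u) +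
          ∑ v, negMulLog (empFreq s (fun i => window x (i + l) m) v) :=
        hjoint ▸ sum_negMulLog_empFreq_prodMk_le s (nonempty_range_iff.2 (Nat.succ_ne_zero _)) _ _
    _ ≤ (∑ u, negMulLog (slidingP x n l u) +
            Fintype.card (Fin l → Bool) * (negMulLog δ + δ)) +
          (∑ v, negMulLog (slidingP x n m v) +
            Fintype.card (Fin m → Bool) * (negMulLog δ + δ)) :=
        add_le_add
          (sum_negMulLog_le_of_abs_sub_le (fun _ => empFreq_mem_Icc ..)
            (fun _ => slidingP_eq_empFreq .. ▸ empFreq_mem_Icc ..)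
            (abs_empFreq_prefix_sub_slidingP_le x n l m) hδ)
          (sum_negMulLog_le_of_abs_sub_le (fun _ => empFreq_mem_Icc ..)
            (fun _ => slidingP_eq_empFreq .. ▸ empFreq_mem_Icc ..)
            (abs_empFreq_suffix_sub_slidingP_le x n l m) hδ)
    _ = _ := by
      simp only [Fintype.card_fun, Fintype.card_fin, Fintype.card_bool]
      push_cast
      ring

theorem sliding_entropy_subadditive_general
    (l m : ℕ) :
    ∃ e : ℕ → ℝ, Tendsto e atTop (nhds 0) ∧
      ∀ (x : Cantor) (n : ℕ),
        ((l + m : ℕ) : ℝ) * slidingH x n (l + m) ≤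
          (l : ℝ) * slidingH x n l + (m : ℝ) * slidingH x n m + e n := by
  refine ⟨fun n => (2 ^ l + 2 ^ m) *
    (negMulLog (windowDefect (l + m) n) + windowDefect (l + m) n) / log 2, ?_, fun x n => ?_⟩
  · have h := tendsto_windowDefect (l + m)
    simpa using ((((continuous_negMulLog.tendsto 0).comp h).add h).const_mul
      (2 ^ l + 2 ^ m)).div_const (log 2)
  · simp only [natCast_mul_slidingH, ← sum_div, ← add_div]
    gcongr
    exact sum_negMulLog_slidingP_add_le x n l m

/-- (l+m)·H_{l+m} ≤ l·H_l + m·H_m + o(n)/n, error depending only on l, m. -/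
theorem sliding_entropy_subadditive
    (l m : ℕ) (hl : 0 < l) (hm : 0 < m) :
    ∃ e : ℕ → ℝ, Tendsto e atTop (nhds 0) ∧
      ∀ (x : Cantor) (n : ℕ),
        ((l + m : ℕ) : ℝ) * slidingH x n (l + m) ≤
          (l : ℝ) * slidingH x n l + (m : ℝ) * slidingH x n m + e n :=
  sliding_entropy_subadditive_general l m

end
end

section
/- For any x ∈ {0,1}^∞ and positive integers l, m, the sliding block entropies satisfy H_{ml}(x_0^{n-1}) ≤ H_l(x_0^{n-1}) + o(n)/n, where the error term depends only on l and m. -/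
open MeasureTheory Filter Topology Real
open scoped ENNReal

noncomputable section

/-!
Subadditivity of entropy bounds the entropy of the sliding `m l`-block distribution by the sum of
the entropies of its `m` marginals on consecutive `l`-blocks. The `t`-th marginal is the empirical
distribution of the `l`-words starting at the `n - m l + 1` positions `l t, …, l t + n - m l`, a
subset of the `n - l + 1` positions counted by the sliding `l`-block distribution, so the two differ
by at most `δ = (m - 1) l / (n - l + 1)` at every word. Since `negMulLog` has modulus of continuity
`2 √δ + δ` on `[0, 1]`, this gives `H_{ml} ≤ H_l + 2 ^ l (2 √δ + δ) / (l log 2)` for `n ≥ m l`; for `n < m l` there is a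
single window and `H_{ml} = 0`.
-/

namespace Real

lemma negMulLog_add_le_s2 {a b : ℝ} (ha : 0 ≤ a) (hb : 0 ≤ b) :
    negMulLog (a + b) ≤ negMulLog a + negMulLog b := by
  rcases ha.eq_or_lt with rfl | ha'
  · simp
  rcases hb.eq_or_lt with rfl | hb'
  · simp
  have hlog_a : log a ≤ log (a + b) := log_le_log ha' (by linarith)
  have hlog_b : log b ≤ log (a + b) := log_le_log hb' (by linarith)
  simp only [negMulLog, neg_mul, add_mul]
  nlinarith [mul_le_mul_of_nonneg_left hlog_a ha, mul_le_mul_of_nonneg_left hlog_b hb]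

lemma negMulLog_le_two_mul_sqrt {c : ℝ} (hc : 0 ≤ c) : negMulLog c ≤ 2 * √c := by
  rcases hc.eq_or_lt with rfl | hc'
  · simp
  have hs : 0 < √c := sqrt_pos.2 hc'
  have hlog : -log c ≤ 2 * (√c)⁻¹ := by
    have := log_le_sub_one_of_pos (inv_pos.2 hs)
    rw [log_inv, log_sqrt hc] at this
    linarith [inv_pos.2 hs]
  calc negMulLog c = c * -log c := by simp [negMulLog]
    _ ≤ c * (2 * (√c)⁻¹) := mul_le_mul_of_nonneg_left hlog hc
    _ = 2 * √c := by
      field_simp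
      rw [sq_sqrt hc]

lemma negMulLog_le_add_sub {p q : ℝ} (hp : 0 ≤ p) (hpq : p ≤ q) (hq : q ≤ 1) :
    negMulLog p ≤ negMulLog q + (q - p) := by
  rcases hp.eq_or_lt with rfl | hp'
  · simp only [negMulLog_zero, sub_zero]
    linarith [negMulLog_nonneg hpq hq]
  have hq' : 0 < q := hp'.trans_le hpq
  have h_div : p * log (q / p) ≤ q - p := by
    have := mul_le_mul_of_nonneg_left (log_le_sub_one_of_pos (div_pos hq' hp')) hp
    rwa [mul_sub, mul_div_cancel₀ _ hp'.ne', mul_one] at this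
  have h_log : (q - p) * log q ≤ 0 :=
    mul_nonpos_of_nonneg_of_nonpos (by linarith) (log_nonpos hq'.le hq)
  rw [log_div hq'.ne' hp'.ne'] at h_div
  simp only [negMulLog, neg_mul]
  nlinarith

lemma negMulLog_le_add_of_abs_sub_le {p q δ : ℝ} (hp : 0 ≤ p) (hq₀ : 0 ≤ q) (hq₁ : q ≤ 1)
    (hpq : |p - q| ≤ δ) : negMulLog p ≤ negMulLog q + (2 * √δ + δ) := by
  rcases le_total p q with h | h
  · have : q - p ≤ δ := (le_abs_self _).trans (abs_sub_comm p q ▸ hpq)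
    linarith [negMulLog_le_add_sub hp h hq₁, sqrt_nonneg δ]
  · have hsub := negMulLog_add_le_s2 hq₀ (sub_nonneg.2 h)
    rw [add_sub_cancel] at hsub
    have hsqrt : √(p - q) ≤ √δ := sqrt_le_sqrt ((le_abs_self _).trans hpq)
    linarith [negMulLog_le_two_mul_sqrt (sub_nonneg.2 h), (abs_nonneg _).trans hpq]

lemma negMulLog_le_neg_mul_log_add_sub_s2 {p q : ℝ} (hp : 0 ≤ p) (hq : 0 ≤ q)
    (hpq : 0 < p → 0 < q) : negMulLog p ≤ -(p * log q) + (q - p) := by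
  rcases hp.eq_or_lt with rfl | hp'
  · simpa using hq
  have hq' := hpq hp'
  have := mul_le_mul_of_nonneg_left (log_le_sub_one_of_pos (div_pos hq' hp')) hp
  rw [log_div hq'.ne' hp'.ne', mul_sub, mul_sub, mul_div_cancel₀ _ hp'.ne', mul_one] at this
  simp only [negMulLog, neg_mul]
  linarith

end Real

open Finset

namespace SlidingBlock

section Entropy

variable {α β : Type*} [Fintype α] [DecidableEq β]

def entropy (Q : α → ℝ) : ℝ := ∑ a, negMulLog (Q a)

def pushforward (f : α → β) (Q : α → ℝ) (b : β) : ℝ := ∑ a with f a = b, Q a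

lemma entropy_nonneg {Q : α → ℝ} (h₀ : ∀ a, 0 ≤ Q a) (h₁ : ∀ a, Q a ≤ 1) : 0 ≤ entropy Q :=
  sum_nonneg fun a _ => negMulLog_nonneg (h₀ a) (h₁ a)

lemma le_pushforward {Q : α → ℝ} (h₀ : ∀ a, 0 ≤ Q a) (f : α → β) (a : α) :
    Q a ≤ pushforward f Q (f a) :=
  single_le_sum (fun a _ => h₀ a) (mem_filter.2 ⟨mem_univ a, rfl⟩)

lemma sum_pushforward [Fintype β] (f : α → β) (Q : α → ℝ) :
    ∑ b, pushforward f Q b = ∑ a, Q a :=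
  sum_fiberwise _ f Q

theorem entropy_le_sum_entropy_pushforward {ι : Type*} [Fintype β] [Fintype ι] [DecidableEq ι]
    {Q : α → ℝ} (h₀ : ∀ a, 0 ≤ Q a) (h₁ : ∑ a, Q a = 1) (r : ι → α → β)
    (hr : Function.Injective fun a t => r t a) :
    entropy Q ≤ ∑ t, entropy (pushforward (r t) Q) := by
  set marg := fun t => pushforward (r t) Q
  have marg_nonneg : ∀ t b, 0 ≤ marg t b := fun t b => sum_nonneg fun a _ => h₀ a
  -- Gibbs' inequality against the product `q` of the marginals, which has total mass `≤ 1`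
  -- because `Q` is determined by its marginals.
  set q : α → ℝ := fun a => ∏ t, marg t (r t a)
  have hq_sum : ∑ a, q a ≤ 1 := calc
    ∑ a, q a = ∑ u ∈ univ.map ⟨_, hr⟩, ∏ t, marg t (u t) :=
      (sum_map univ ⟨_, hr⟩ fun u => ∏ t, marg t (u t)).symm
    _ ≤ ∑ u : ι → β, ∏ t, marg t (u t) :=
      sum_le_univ_sum_of_nonneg fun u => prod_nonneg fun t _ => marg_nonneg t _
    _ = 1 := by
      rw [← Fintype.prod_sum]
      simp [marg, sum_pushforward, h₁]
  have hlog_q : ∀ a, -(Q a * log (q a)) = ∑ t, -(Q a * log (marg t (r t a))) := fun a => by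
    rcases (h₀ a).eq_or_lt with h | h
    · simp [← h]
    rw [log_prod fun t _ => (h.trans_le (le_pushforward h₀ _ a)).ne', mul_sum, sum_neg_distrib]
  have hcross : ∀ t, ∑ a, -(Q a * log (marg t (r t a))) = entropy (marg t) := fun t => by
    rw [← sum_fiberwise univ (r t)]
    refine sum_congr rfl fun b _ => ?_
    rw [sum_congr rfl fun a ha => by rw [(mem_filter.1 ha).2], sum_neg_distrib, ← sum_mul]
    simp [negMulLog, marg, pushforward]
  calc entropy Q ≤ ∑ a, (-(Q a * log (q a)) + (q a - Q a)) :=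
        sum_le_sum fun a _ => negMulLog_le_neg_mul_log_add_sub_s2 (h₀ a)
          (prod_nonneg fun t _ => marg_nonneg t _)
          fun h => prod_pos fun t _ => h.trans_le (le_pushforward h₀ _ a)
    _ ≤ ∑ a, -(Q a * log (q a)) := by
      rw [sum_add_distrib, sum_sub_distrib, h₁]
      linarith
    _ = ∑ t, entropy (marg t) := by
      simp_rw [hlog_q]
      rw [sum_comm]
      exact sum_congr rfl fun t _ => hcross t

end Entropy

section Empirical

variable {α β γ : Type*} [DecidableEq α] (s : Finset γ) (g : γ → α)

def empirical (a : α) : ℝ := #{i ∈ s | g i = a} / #s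

lemma empirical_nonneg (a : α) : 0 ≤ empirical s g a := by
  unfold empirical
  positivity

lemma empirical_le_one (a : α) : empirical s g a ≤ 1 :=
  div_le_one_of_le₀ (mod_cast card_filter_le _ _) (Nat.cast_nonneg _)

lemma sum_empirical [Fintype α] {s : Finset γ} (hs : s.Nonempty) :
    ∑ a, empirical s g a = 1 := by
  simp only [empirical, ← sum_div]
  rw [← Nat.cast_sum, ← card_eq_sum_card_fiberwise fun i _ => mem_univ (g i)]
  exact div_self (mod_cast hs.card_pos.ne')

lemma pushforward_empirical [Fintype α] [DecidableEq β] (f : α → β) :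
    pushforward f (empirical s g) = empirical s (f ∘ g) := by
  ext b
  have hcount : ∑ a with f a = b, #{i ∈ s | g i = a} = #{i ∈ s | f (g i) = b} := by
    rw [card_eq_sum_card_fiberwise (s := s.filter fun i => f (g i) = b)
      (t := ({a | f a = b} : Finset α)) fun i hi => by simpa using (mem_filter.1 hi).2]
    refine sum_congr rfl fun a ha => congrArg card ?_
    rw [filter_filter, ← (mem_filter.1 ha).2]
    exact filter_congr fun i _ => ⟨fun h => ⟨congrArg f h, h⟩, And.right⟩
  simp only [pushforward, empirical, ← sum_div, Function.comp_apply]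
  rw [← Nat.cast_sum, hcount]

lemma empirical_map (e : γ ↪ β) (g : β → α) : empirical (s.map e) g = empirical s (g ∘ e) := by
  ext a
  simp only [empirical, filter_map, card_map]
  rfl

lemma entropy_empirical_singleton [Fintype α] (i : γ) : entropy (empirical {i} g) = 0 := by
  refine sum_eq_zero fun a _ => ?_
  by_cases h : g i = a <;> simp [empirical, filter_singleton, h]

variable {s} in
lemma abs_empirical_sub_empirical_le [DecidableEq γ] {t : Finset γ} (hst : s ⊆ t)
    (hs : s.Nonempty) (a : α) :
    |empirical s g a - empirical t g a| ≤ #(t \ s) / #t := by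
  have hA : #{i ∈ s | g i = a} ≤ #{i ∈ t | g i = a} := card_le_card (filter_subset_filter _ hst)
  have hB : #{i ∈ t | g i = a} ≤ #{i ∈ s | g i = a} + #(t \ s) := by
    refine (card_le_card fun i hi => ?_).trans (card_union_le _ _)
    rw [mem_filter] at hi
    by_cases his : i ∈ s
    · exact mem_union_left _ (mem_filter.2 ⟨his, hi.2⟩)
    · exact mem_union_right _ (mem_sdiff.2 ⟨hi.1, his⟩)
  have hA' : (#{i ∈ s | g i = a} : ℝ) ≤ #{i ∈ t | g i = a} := mod_cast hA
  have hB' : (#{i ∈ t | g i = a} : ℝ) ≤ #{i ∈ s | g i = a} + #(t \ s) := mod_cast hB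
  have hAs : (#{i ∈ s | g i = a} : ℝ) ≤ #s := mod_cast card_filter_le _ _
  have hst' : (#(t \ s) : ℝ) + #s = #t := mod_cast card_sdiff_add_card_eq_card hst
  have hs' : (0 : ℝ) < #s := mod_cast hs.card_pos
  have ht : (0 : ℝ) < #t := mod_cast hs.card_pos.trans_le (card_le_card hst)
  simp only [empirical]
  rw [div_sub_div _ _ hs'.ne' ht.ne', show (#(t \ s) : ℝ) / #t = #(t \ s) * #s / (#s * #t) by
    field_simp, abs_div, abs_of_pos (mul_pos hs' ht), div_le_div_iff_of_pos_right (mul_pos hs' ht),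
    abs_le]
  constructor <;> nlinarith

end Empirical

def window (x : Cantor) (k i : ℕ) : Fin k → Bool := fun j => x (i + j)

/-- Positions `l * t, …, l * t + l - 1`, as `finProdFinEquiv (t, j) = j + l * t`. -/
def block {m l : ℕ} (t : Fin m) (u : Fin (m * l) → Bool) : Fin l → Bool :=
  fun j => u (finProdFinEquiv (t, j))

lemma block_injective (m l : ℕ) :
    Function.Injective fun (u : Fin (m * l) → Bool) (t : Fin m) => block t u := by
  intro u u' h
  funext k
  obtain ⟨⟨t, j⟩, rfl⟩ := finProdFinEquiv.surjective k
  exact congrFun (congrFun h t) j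

lemma block_window (x : Cantor) {m : ℕ} (l : ℕ) (t : Fin m) (i : ℕ) :
    block t (window x (m * l) i) = window x l (i + l * t) := by
  funext j
  simp only [block, window, finProdFinEquiv_apply_val]
  ring_nf

lemma slidingP_eq_empirical (x : Cantor) (n k : ℕ) :
    slidingP x n k = empirical (range (n - k + 1)) (window x k) := by
  funext w
  simp [slidingP, empirical, window, funext_iff]

lemma slidingH_eq_entropy_div (x : Cantor) (n k : ℕ) :
    slidingH x n k = entropy (slidingP x n k) / (k * log 2) := by
  simp only [slidingH, entropy, negMulLog2, negMulLog, logb, sum_div, mul_sum]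
  refine sum_congr rfl fun w _ => ?_
  field_simp

lemma slidingH_eq_zero_of_le (x : Cantor) {n k : ℕ} (h : n ≤ k) : slidingH x n k = 0 := by
  rw [slidingH_eq_entropy_div, slidingP_eq_empirical, Nat.sub_eq_zero_of_le h, range_one,
    entropy_empirical_singleton, zero_div]

lemma slidingH_nonneg (x : Cantor) (n k : ℕ) : 0 ≤ slidingH x n k := by
  rw [slidingH_eq_entropy_div, slidingP_eq_empirical]
  have := entropy_nonneg (empirical_nonneg (range (n - k + 1)) (window x k))
    (empirical_le_one _ _)
  positivity

lemma pushforward_block_slidingP (x : Cantor) (n : ℕ) {m : ℕ} (l : ℕ) (t : Fin m) :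
    pushforward (block t) (slidingP x n (m * l))
      = empirical ((range (n - m * l + 1)).map (addRightEmbedding (l * t))) (window x l) := by
  rw [slidingP_eq_empirical, pushforward_empirical, empirical_map]
  congr 1
  funext i
  exact block_window x l t i

lemma abs_pushforward_block_slidingP_sub_le (x : Cantor) {n m l : ℕ} (hn : m * l ≤ n)
    (t : Fin m) (w : Fin l → Bool) :
    |pushforward (block t) (slidingP x n (m * l)) w - slidingP x n l w|
      ≤ ((m * l - l : ℕ) : ℝ) / ((n - l + 1 : ℕ) : ℝ) := by
  have ht : l * t + l ≤ m * l := by nlinarith [t.2]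
  have hsub : (range (n - m * l + 1)).map (addRightEmbedding (l * t)) ⊆ range (n - l + 1) := by
    simp only [subset_iff, Finset.mem_map, mem_range, addRightEmbedding_apply]
    rintro _ ⟨i, hi, rfl⟩
    omega
  rw [pushforward_block_slidingP, slidingP_eq_empirical]
  refine (abs_empirical_sub_empirical_le _ hsub (by simp) w).trans_eq ?_
  rw [card_sdiff_of_subset hsub, card_map, card_range, card_range,
    show n - l + 1 - (n - m * l + 1) = m * l - l by omega]

lemma entropy_slidingP_mul_le (x : Cantor) {n m l : ℕ} (hn : m * l ≤ n) :
    entropy (slidingP x n (m * l)) ≤ m * (entropy (slidingP x n l)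
      + 2 ^ l * (2 * √(((m * l - l : ℕ) : ℝ) / ((n - l + 1 : ℕ) : ℝ))
        + ((m * l - l : ℕ) : ℝ) / ((n - l + 1 : ℕ) : ℝ))) := by
  set δ : ℝ := ((m * l - l : ℕ) : ℝ) / ((n - l + 1 : ℕ) : ℝ)
  have hP₀ : ∀ k w, 0 ≤ slidingP x n k w := fun k w => by
    rw [slidingP_eq_empirical]
    exact empirical_nonneg _ _ w
  have hP₁ : ∀ k w, slidingP x n k w ≤ 1 := fun k w => by
    rw [slidingP_eq_empirical]
    exact empirical_le_one _ _ w
  have hmarg : ∀ t : Fin m, entropy (pushforward (block t) (slidingP x n (m * l)))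
      ≤ entropy (slidingP x n l) + 2 ^ l * (2 * √δ + δ) := fun t => calc
    _ ≤ ∑ w : Fin l → Bool, (negMulLog (slidingP x n l w) + (2 * √δ + δ)) :=
      sum_le_sum fun w _ => negMulLog_le_add_of_abs_sub_le
        (sum_nonneg fun u _ => hP₀ _ u) (hP₀ l w) (hP₁ l w)
        (abs_pushforward_block_slidingP_sub_le x hn t w)
    _ = _ := by simp [sum_add_distrib, entropy, mul_add]
  calc entropy (slidingP x n (m * l))
      ≤ ∑ t : Fin m, entropy (pushforward (block t) (slidingP x n (m * l))) :=
        entropy_le_sum_entropy_pushforward (hP₀ _)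
          (by rw [slidingP_eq_empirical]; exact sum_empirical _ (by simp)) _ (block_injective m l)
    _ ≤ ∑ _t : Fin m, (entropy (slidingP x n l) + 2 ^ l * (2 * √δ + δ)) :=
        sum_le_sum fun t _ => hmarg t
    _ = _ := by simp [mul_add]

end SlidingBlock

open SlidingBlock in
theorem sliding_entropy_multiple_general
    (l m : ℕ) (hm : 0 < m) :
    ∃ e : ℕ → ℝ, Tendsto e atTop (nhds 0) ∧
      ∀ (x : Cantor) (n : ℕ), slidingH x n (m * l) ≤ slidingH x n l + e n := by
  set δ : ℕ → ℝ := fun n => ((m * l - l : ℕ) : ℝ) / ((n - l + 1 : ℕ) : ℝ)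
  have hδ : Tendsto δ atTop (𝓝 0) :=
    tendsto_const_nhds.div_atTop <| tendsto_natCast_atTop_atTop.comp <|
      tendsto_atTop_mono (fun n => Nat.le_succ _) (tendsto_sub_atTop_nat l)
  refine ⟨fun n => 2 ^ l * (2 * √(δ n) + δ n) / (l * log 2), ?_, fun x n => ?_⟩
  · simpa using ((((continuous_sqrt.tendsto 0).comp hδ).const_mul 2).add hδ).const_mul
      ((2 : ℝ) ^ l) |>.div_const (l * log 2)
  rcases lt_or_ge n (m * l) with hn | hn
  · have he : 0 ≤ 2 ^ l * (2 * √(δ n) + δ n) / (l * log 2) := by positivity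
    rw [slidingH_eq_zero_of_le x hn.le]
    linarith [slidingH_nonneg x n l]
  rw [slidingH_eq_entropy_div, slidingH_eq_entropy_div, ← add_div]
  calc entropy (slidingP x n (m * l)) / ((m * l : ℕ) * log 2)
      ≤ m * (entropy (slidingP x n l) + 2 ^ l * (2 * √(δ n) + δ n)) / ((m * l : ℕ) * log 2) :=
        div_le_div_of_nonneg_right (entropy_slidingP_mul_le x hn) (by positivity)
    _ = _ := by
      push_cast
      rw [mul_assoc, mul_div_mul_left _ _ (by positivity)]

/-- H_{ml} ≤ H_l + o(n)/n, error depending only on l and m. -/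
theorem sliding_entropy_multiple
    (l m : ℕ) (hl : 0 < l) (hm : 0 < m) :
    ∃ e : ℕ → ℝ, Tendsto e atTop (nhds 0) ∧
      ∀ (x : Cantor) (n : ℕ), slidingH x n (m * l) ≤ slidingH x n l + e n :=
  sliding_entropy_multiple_general l m hm
end
end

section
/- Let x ∈ {0,1}^∞ with v(x) not a dyadic rational, let ν'_n = (1/n) Σ_{j=0}^{n-1} δ_{2^j v(x) mod 1} on the torus, and let d be a non-zero dyadic rational. If ν'_{n_m} ⇒ μ' weakly along some subsequence ⟨n_m⟩, then μ'({d}) = 0. -/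
open MeasureTheory Filter Topology Real
open scoped ENNReal

noncomputable section

/-! Weak limits of the empirical measures along the doubling orbit `2 ^ j • v(x)` are invariant
under the doubling map `t ↦ 2 • t`, since the difference `∫ f (2 • y) dν'_n - ∫ f dν'_n`
telescopes to `(f (2 ^ n • v(x)) - f (v(x))) / n`. For an invariant finite measure,
`μ {t} ≤ μ {2 • t}`, and `μ {1/2} = 0` because `{0, 1/2}` is the preimage of the fixed
point `0`. A non-zero dyadic `d` reaches `0` under iterated doubling, passing through `1/2`
on the way, so `μ {d} ≤ μ {1/2} = 0`. -/

open scoped BoundedContinuousFunction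

section MeasurePreservingAtoms

variable {α : Type*} [MeasurableSpace α] {μ : Measure α} {T : α → α}

theorem MeasureTheory.MeasurePreserving.measure_singleton_le_apply
    (hT : MeasurePreserving T μ μ) (t : α) : μ {t} ≤ μ {T t} :=
  (measure_mono fun _ hs => congrArg T hs).trans (hT.measure_preimage_le {T t})

variable [MeasurableSingletonClass α] [IsFiniteMeasure μ] {p : α}

/-- `{p, q} ⊆ T ⁻¹' {p}`, whose mass is that of `{p}` alone. -/
theorem MeasureTheory.MeasurePreserving.measure_singleton_eq_zero_of_apply_eq_fixedPt
    (hT : MeasurePreserving T μ μ) (hp : Function.IsFixedPt T p) {q : α} (hq : T q = p)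
    (hqp : q ≠ p) : μ {q} = 0 := by
  have hsum : μ {p} + μ {q} ≤ μ {p} + 0 :=
    calc μ {p} + μ {q} = μ ({p} ∪ {q}) :=
          (measure_union (Set.disjoint_singleton.2 hqp.symm) (measurableSet_singleton q)).symm
      _ ≤ μ (T ⁻¹' {p}) :=
          measure_mono (Set.union_subset (Set.singleton_subset_iff.2 hp)
            (Set.singleton_subset_iff.2 hq))
      _ ≤ μ {p} + 0 := by rw [add_zero]; exact hT.measure_preimage_le {p}
  exact nonpos_iff_eq_zero.1 ((ENNReal.add_le_add_iff_left (measure_ne_top μ _)).1 hsum)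

theorem MeasureTheory.MeasurePreserving.measure_singleton_eq_zero_of_iterate_eq_fixedPt
    (hT : MeasurePreserving T μ μ) (hp : Function.IsFixedPt T p) {n : ℕ} {t : α}
    (ht : T^[n] t = p) (htp : t ≠ p) : μ {t} = 0 := by
  induction n generalizing t with
  | zero => exact absurd ht htp
  | succ n ih =>
    by_cases hTt : T t = p
    · exact hT.measure_singleton_eq_zero_of_apply_eq_fixedPt hp hTt htp
    · exact nonpos_iff_eq_zero.1 <|
        (hT.measure_singleton_le_apply t).trans (ih ht hTt).le

end MeasurePreservingAtoms

section WeakConvergence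

variable {α : Type*} [TopologicalSpace α] [MeasurableSpace α] {ν : ℕ → Measure α}
  {μ : Measure α}

theorem WeakConv.tendsto_integral (h : WeakConv ν μ) (f : α →ᵇ ℝ) :
    Tendsto (fun n => ∫ y, f y ∂(ν n)) atTop (𝓝 (∫ y, f y ∂μ)) := by
  have hf := h (f.comp Complex.ofReal Complex.isometry_ofReal.lipschitz)
  simp only [BoundedContinuousFunction.comp_apply, integral_complex_ofReal] at hf
  exact Complex.isometry_ofReal.isUniformEmbedding.isEmbedding.tendsto_nhds_iff.2 hf

theorem WeakConv.map_eq_self [HasOuterApproxClosed α] [BorelSpace α] [IsFiniteMeasure μ]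
    (h : WeakConv ν μ) {T : α → α} (hT : Continuous T)
    (hνT : ∀ f : α →ᵇ ℝ,
      Tendsto (fun n => ∫ y, f (T y) ∂(ν n) - ∫ y, f y ∂(ν n)) atTop (𝓝 0)) :
    μ.map T = μ := by
  refine ext_of_forall_integral_eq_of_IsFiniteMeasure fun f => ?_
  rw [integral_map hT.aemeasurable f.continuous.aestronglyMeasurable]
  have hlim : Tendsto (fun n => ∫ y, f (T y) ∂(ν n)) atTop (𝓝 (∫ y, f y ∂μ)) := by
    simpa using (h.tendsto_integral f).add (hνT f)
  exact tendsto_nhds_unique (h.tendsto_integral (f.compContinuous ⟨T, hT⟩)) hlim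

end WeakConvergence

section Doubling

theorem integral_empMeasT (r : ℝ) (n : ℕ) (f : UnitAddCircle →ᵇ ℝ) :
    ∫ y, f y ∂(empMeasT r n) =
      (n : ℝ)⁻¹ * ∑ j ∈ Finset.range n, f (2 ^ j • (r : UnitAddCircle)) := by
  simp [empMeasT, integral_smul_measure,
    integral_finsetSum_measure (fun _ _ => f.integrable _), ← AddCircle.coe_nsmul]

theorem tendsto_integral_comp_two_nsmul_sub_empMeasT (r : ℝ) (f : UnitAddCircle →ᵇ ℝ) :
    Tendsto (fun n => ∫ y, f (2 • y) ∂(empMeasT r n) - ∫ y, f y ∂(empMeasT r n))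
      atTop (𝓝 0) := by
  have htel (n : ℕ) : ∫ y, f (2 • y) ∂(empMeasT r n) - ∫ y, f y ∂(empMeasT r n)
      = (n : ℝ)⁻¹ * (f (2 ^ n • (r : UnitAddCircle)) - f r) := by
    have hcomp := integral_empMeasT r n (f.compContinuous ⟨(2 • ·), continuous_const_smul 2⟩)
    simp only [BoundedContinuousFunction.compContinuous_apply, ContinuousMap.coe_mk, smul_smul,
      ← pow_succ'] at hcomp
    rw [hcomp, integral_empMeasT, ← mul_sub, ← Finset.sum_sub_distrib,
      Finset.sum_range_sub (fun j => f (2 ^ j • (r : UnitAddCircle))),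
      pow_zero, one_smul]
  simp_rw [htel]
  refine squeeze_zero_norm (fun n => ?_)
    (by simpa using (tendsto_inv_atTop_nhds_zero_nat (𝕜 := ℝ)).mul_const (2 * ‖f‖))
  rw [norm_mul, norm_inv, RCLike.norm_natCast]
  exact mul_le_mul_of_nonneg_left (f.dist_le_two_norm _ _) (by positivity)

theorem IsDyadic.exists_two_pow_nsmul_eq_zero {d : ℝ} (hd : IsDyadic d) :
    ∃ n : ℕ, 2 ^ n • (d : UnitAddCircle) = 0 := by
  obtain ⟨a, n, rfl⟩ := hd
  refine ⟨n, ?_⟩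
  rw [← AddCircle.coe_nsmul, nsmul_eq_mul, Nat.cast_pow, Nat.cast_ofNat,
    mul_div_cancel₀ _ (by positivity), AddCircle.coe_eq_zero_iff]
  exact ⟨a, by simp⟩

end Doubling

theorem limit_measure_vanishes_at_nonzero_dyadic_general
    (x : Cantor)
    (d : ℝ) (hd : IsDyadic d) (hd0 : (d : UnitAddCircle) ≠ 0)
    (μ' : Measure UnitAddCircle) (hμ' : IsProbabilityMeasure μ')
    (φ : ℕ → ℕ) (hφ : StrictMono φ)
    (hw : WeakConv (fun m => empMeasT (eval x) (φ m)) μ') :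
    μ' {(d : UnitAddCircle)} = 0 := by
  obtain ⟨n, hn⟩ := hd.exists_two_pow_nsmul_eq_zero
  have hdouble : MeasurePreserving (fun t : UnitAddCircle => 2 • t) μ' μ' :=
    ⟨(continuous_const_smul 2).measurable, hw.map_eq_self (continuous_const_smul 2) fun f =>
      (tendsto_integral_comp_two_nsmul_sub_empMeasT (eval x) f).comp hφ.tendsto_atTop⟩
  exact hdouble.measure_singleton_eq_zero_of_iterate_eq_fixedPt (nsmul_zero 2)
    (by rwa [smul_iterate]) hd0

/-- subsequence weak limits give zero mass to non-zero dyadic rationals. -/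
theorem limit_measure_vanishes_at_nonzero_dyadic
    (x : Cantor) (hx : ¬ IsDyadic (eval x))
    (d : ℝ) (hd : IsDyadic d) (hd0 : (d : UnitAddCircle) ≠ 0)
    (μ' : Measure UnitAddCircle) (hμ' : IsProbabilityMeasure μ')
    (φ : ℕ → ℕ) (hφ : StrictMono φ) (hφ0 : ∀ m, 0 < φ m)
    (hw : WeakConv (fun m => empMeasT (eval x) (φ m)) μ') :
    μ' {(d : UnitAddCircle)} = 0 :=
  limit_measure_vanishes_at_nonzero_dyadic_general x d hd hd0 μ' hμ' φ hφ hw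
end
end

section
/- For any Borel probability measure μ on the torus 𝕋 = [0,1) and any two partition factors m₁, m₂ ≥ 2, the upper and lower Rényi dimensions of μ computed with base m₁ agree with those computed with base m₂. -/
open MeasureTheory Filter Topology Real
open scoped ENNReal

noncomputable section

/-!
Write `H(N)` for the entropy of `μ` on the partition of the circle into the `N` arcs
`[k/N, (k+1)/N)`, so that the base-`m` ratio at level `n` is `H(m ^ n) / log (m ^ n)`. Each of
the `N` arcs meets at most `M / N + 2` of the `M` arcs, hence `H(M) ≤ H(N) + log (M / N + 2)`
for all `N, M ≥ 1`. For `m ^ n ≤ N < m ^ (n + 1)` this gives `|H(N) - H(m ^ n)| ≤ log (m + 2)`,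
and `0 ≤ log N - log (m ^ n) ≤ log m`, so `H(N) / log N - H(m ^ n) / log (m ^ n) → 0`. As
`Nat.log m` maps `atTop` onto `atTop`, the base-`m` liminf and limsup are those of
`H(N) / log N`, which do not depend on `m`.
-/

namespace Real

lemma negMulLog_sum_le_sum_negMulLog {ι : Type*} {t : Finset ι} {x : ι → ℝ}
    (hx : ∀ i ∈ t, 0 ≤ x i) : negMulLog (∑ i ∈ t, x i) ≤ ∑ i ∈ t, negMulLog (x i) := by
  have hterm : ∀ i ∈ t, -x i * log (∑ j ∈ t, x j) ≤ negMulLog (x i) := fun i hi => by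
    rcases (hx i hi).eq_or_lt with h0 | h0
    · simp [← h0]
    · have := log_le_log h0 (Finset.single_le_sum hx hi)
      rw [negMulLog]
      nlinarith
  calc negMulLog (∑ i ∈ t, x i) = ∑ i ∈ t, -x i * log (∑ j ∈ t, x j) := by
        simp [negMulLog, Finset.sum_mul]
    _ ≤ ∑ i ∈ t, negMulLog (x i) := Finset.sum_le_sum hterm

lemma sum_negMulLog_le_of_card_le {ι : Type*} {t : Finset ι} {x : ι → ℝ} {C : ℕ}
    (hx : ∀ i ∈ t, 0 ≤ x i) (hC : t.card ≤ C) :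
    ∑ i ∈ t, negMulLog (x i) ≤ negMulLog (∑ i ∈ t, x i) + (∑ i ∈ t, x i) * log C := by
  rcases t.eq_empty_or_nonempty with rfl | ht
  · simp
  have hn : (0 : ℝ) < t.card := by exact_mod_cast ht.card_pos
  have hJensen := concaveOn_negMulLog.le_map_sum (t := t) (w := fun _ => (t.card : ℝ)⁻¹)
    (p := x) (fun _ _ => by positivity) (by simp [Finset.sum_const, hn.ne']) hx
  simp only [smul_eq_mul, ← Finset.mul_sum, negMulLog_mul] at hJensen
  have hinv : negMulLog (t.card : ℝ)⁻¹ = (t.card : ℝ)⁻¹ * log t.card := by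
    simp [negMulLog, log_inv]
  rw [hinv] at hJensen
  have hcard : ∑ i ∈ t, negMulLog (x i) ≤
      negMulLog (∑ i ∈ t, x i) + (∑ i ∈ t, x i) * log t.card := by
    rw [← mul_le_mul_iff_of_pos_left (inv_pos.mpr hn)]
    linarith
  have hlog : log t.card ≤ log C := log_le_log hn (by exact_mod_cast hC)
  exact hcard.trans (add_le_add_right (mul_le_mul_of_nonneg_left hlog (Finset.sum_nonneg hx)) _)

lemma sum_negMulLog_le_of_card_support_le {ι : Type*} {t : Finset ι} {x : ι → ℝ} {C : ℕ}
    (hx : ∀ i ∈ t, 0 ≤ x i) (hC : (t.filter fun i => x i ≠ 0).card ≤ C) :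
    ∑ i ∈ t, negMulLog (x i) ≤ negMulLog (∑ i ∈ t, x i) + (∑ i ∈ t, x i) * log C := by
  rw [← Finset.sum_filter_ne_zero (s := t) (f := x),
    ← Finset.sum_filter_of_ne (p := fun i => x i ≠ 0) fun i _ h hx0 => h (by simp [hx0])]
  exact sum_negMulLog_le_of_card_le (fun i hi => hx i (Finset.mem_filter.mp hi).1) hC

end Real

namespace MeasureTheory

variable {α β γ : Type*} [MeasurableSpace α]

def partitionEntropy (ν : Measure α) (f : α → β) (s : Finset β) : ℝ :=
  ∑ i ∈ s, negMulLog (ν.real (f ⁻¹' {i}))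

lemma partitionEntropy_nonneg (ν : Measure α) [IsProbabilityMeasure ν] (f : α → β)
    (s : Finset β) : 0 ≤ partitionEntropy ν f s :=
  Finset.sum_nonneg fun _ _ => negMulLog_nonneg measureReal_nonneg measureReal_le_one

variable [MeasurableSpace β] [MeasurableSpace γ] [MeasurableSingletonClass β]
  [MeasurableSingletonClass γ] {ν : Measure α} [IsFiniteMeasure ν]

lemma measureReal_eq_sum_inter_preimage {f : α → β} {s : Finset β} (hf : Measurable f)
    (hfs : ∀ x, f x ∈ s) (A : Set α) :
    ν.real A = ∑ i ∈ s, ν.real (A ∩ f ⁻¹' {i}) := by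
  have hsum := sum_measureReal_preimage_singleton (μ := ν.restrict A) s
    fun i _ => hf (measurableSet_singleton i)
  rw [Set.eq_univ_of_forall (s := f ⁻¹' s) fun x => Finset.mem_coe.2 (hfs x),
    measureReal_restrict_apply_univ] at hsum
  simp only [← hsum, measureReal_restrict_apply (hf (measurableSet_singleton _)),
    Set.inter_comm A]

lemma sum_measureReal_preimage_singleton_of_forall_mem {f : α → β} {s : Finset β}
    (hf : Measurable f) (hfs : ∀ x, f x ∈ s) : ∑ i ∈ s, ν.real (f ⁻¹' {i}) = ν.real Set.univ := by
  simp only [measureReal_eq_sum_inter_preimage hf hfs Set.univ, Set.univ_inter]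

lemma partitionEntropy_le_add_mul_log {f : α → β} {g : α → γ} {s : Finset β} {t : Finset γ}
    {C : ℕ} (hf : Measurable f) (hg : Measurable g) (hfs : ∀ x, f x ∈ s) (hgt : ∀ x, g x ∈ t)
    (hC : ∀ i ∈ s, ∃ T : Finset γ, T.card ≤ C ∧ ∀ x, f x = i → g x ∈ T) :
    partitionEntropy ν g t ≤ partitionEntropy ν f s + ν.real Set.univ * log C := by
  -- `H(g) ≤ H(f ∨ g)`, and each cell of `f` is split by `g` into at most `C` pieces.
  have hrefine : partitionEntropy ν g t ≤
      ∑ i ∈ s, ∑ k ∈ t, negMulLog (ν.real (f ⁻¹' {i} ∩ g ⁻¹' {k})) := by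
    rw [Finset.sum_comm]
    refine Finset.sum_le_sum fun k _ => ?_
    rw [measureReal_eq_sum_inter_preimage hf hfs]
    simp only [Set.inter_comm (g ⁻¹' {k})]
    exact negMulLog_sum_le_sum_negMulLog fun _ _ => measureReal_nonneg
  have hcell : ∀ i ∈ s, ∑ k ∈ t, negMulLog (ν.real (f ⁻¹' {i} ∩ g ⁻¹' {k})) ≤
      negMulLog (ν.real (f ⁻¹' {i})) + ν.real (f ⁻¹' {i}) * log C := by
    intro i hi
    obtain ⟨T, hTC, hT⟩ := hC i hi
    have hsupport : (t.filter fun k => ν.real (f ⁻¹' {i} ∩ g ⁻¹' {k}) ≠ 0) ⊆ T := by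
      intro k hk
      obtain ⟨x, hxi, hxk⟩ := nonempty_of_measureReal_ne_zero (Finset.mem_filter.mp hk).2
      exact hxk ▸ hT x hxi
    rw [measureReal_eq_sum_inter_preimage hg hgt (f ⁻¹' {i})]
    exact sum_negMulLog_le_of_card_support_le (fun _ _ => measureReal_nonneg)
      ((Finset.card_le_card hsupport).trans hTC)
  calc partitionEntropy ν g t
      ≤ ∑ i ∈ s, (negMulLog (ν.real (f ⁻¹' {i})) + ν.real (f ⁻¹' {i}) * log C) :=
        hrefine.trans (Finset.sum_le_sum hcell)
    _ = partitionEntropy ν f s + ν.real Set.univ * log C := by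
        rw [Finset.sum_add_distrib, ← Finset.sum_mul,
          sum_measureReal_preimage_singleton_of_forall_mem hf hfs, partitionEntropy]

lemma partitionEntropy_le_log_card [IsProbabilityMeasure ν] {f : α → β} {s : Finset β}
    (hf : Measurable f) (hfs : ∀ x, f x ∈ s) : partitionEntropy ν f s ≤ log s.card := by
  have h := sum_negMulLog_le_of_card_le (t := s) (x := fun i => ν.real (f ⁻¹' {i}))
    (fun _ _ => measureReal_nonneg) le_rfl
  rwa [sum_measureReal_preimage_singleton_of_forall_mem hf hfs, probReal_univ, negMulLog_one,
    zero_add, one_mul] at h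

end MeasureTheory

lemma Nat.floor_mul_mem_Ico {t : ℝ} (ht : 0 ≤ t) {N : ℕ} (hN : 0 < N) (M : ℕ) :
    ⌊M * t⌋₊ ∈ Finset.Ico (M * ⌊N * t⌋₊ / N) (M * ⌊N * t⌋₊ / N + (M / N + 2)) := by
  set j := ⌊N * t⌋₊
  have hN' : (0 : ℝ) < N := by exact_mod_cast hN
  have hj : (j : ℝ) ≤ N * t := Nat.floor_le (by positivity)
  have hj' : N * t < j + 1 := Nat.lt_floor_add_one _
  have hMt : (M : ℝ) * t ≤ M * (j + 1) / N := by
    rw [le_div_iff₀ hN']; nlinarith [M.cast_nonneg (α := ℝ)]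
  have hdiv (a : ℕ) : (a : ℝ) / N < (a / N : ℕ) + 1 := by
    rw [← Nat.floor_div_eq_div (K := ℝ)]; exact Nat.lt_floor_add_one _
  rw [Finset.mem_Ico]
  constructor
  · refine Nat.le_floor ((Nat.cast_div_le (α := ℝ)).trans ?_)
    rw [div_le_iff₀ hN']; push_cast; nlinarith [M.cast_nonneg (α := ℝ)]
  · have h1 := hdiv (M * j)
    have h2 := hdiv M
    push_cast at h1
    have : (⌊M * t⌋₊ : ℝ) < (M * j / N : ℕ) + ((M / N : ℕ) + 2) := by
      calc (⌊M * t⌋₊ : ℝ) ≤ M * t := Nat.floor_le (by positivity)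
        _ ≤ M * (j + 1) / N := hMt
        _ = M * j / N + M / N := by ring
        _ < _ := by linarith
    exact_mod_cast this

def cellIndex (N : ℕ) (x : UnitAddCircle) : ℕ :=
  ⌊(N : ℝ) * (AddCircle.equivIco 1 0 x : ℝ)⌋₊

lemma measurable_cellIndex (N : ℕ) : Measurable (cellIndex N) :=
  ((measurable_subtype_coe.comp (AddCircle.measurableEquivIco 1 0).measurable).const_mul
    (N : ℝ)).nat_floor

lemma cellIndex_lt {N : ℕ} (hN : 0 < N) (x : UnitAddCircle) : cellIndex N x < N := by
  have hx : (AddCircle.equivIco 1 0 x : ℝ) ∈ Set.Ico 0 1 := by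
    simpa using (AddCircle.equivIco 1 0 x).2
  refine (Nat.floor_lt (by positivity [hx.1])).2 ?_
  have hN' : (0 : ℝ) < N := by exact_mod_cast hN
  nlinarith [hx.2]

lemma cellIndex_mem_Ico {N : ℕ} (hN : 0 < N) (M : ℕ) (x : UnitAddCircle) :
    cellIndex M x ∈ Finset.Ico (M * cellIndex N x / N) (M * cellIndex N x / N + (M / N + 2)) :=
  Nat.floor_mul_mem_Ico (AddCircle.equivIco 1 0 x).2.1 hN M

lemma image_Ico_eq_preimage_cellIndex {N k : ℕ} (hk : k < N) :
    (fun t : ℝ => (t : UnitAddCircle)) '' Set.Ico (k / N) ((k + 1) / N) =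
      cellIndex N ⁻¹' {k} := by
  have hN : (0 : ℝ) < N := by exact_mod_cast (k.zero_le.trans_lt hk)
  have hfloor {t : ℝ} (ht : 0 ≤ t) : ⌊N * t⌋₊ = k ↔ t ∈ Set.Ico ((k : ℝ) / N) ((k + 1) / N) := by
    rw [Nat.floor_eq_iff (by positivity), Set.mem_Ico, div_le_iff₀ hN, lt_div_iff₀ hN,
      mul_comm t]
  ext x
  simp only [Set.mem_image, Set.mem_preimage, Set.mem_singleton_iff, cellIndex]
  constructor
  · rintro ⟨t, ht, rfl⟩
    have ht01 : t ∈ Set.Ico (0 : ℝ) (0 + 1) := by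
      refine ⟨(by positivity : (0 : ℝ) ≤ k / N).trans ht.1, ht.2.trans_le ?_⟩
      rw [zero_add, div_le_one hN]; exact_mod_cast hk
    rw [AddCircle.equivIco_coe_of_mem ht01]
    exact (hfloor ht01.1).2 ht
  · intro hx
    exact ⟨_, (hfloor (AddCircle.equivIco 1 0 x).2.1).1 hx, AddCircle.coe_equivIco⟩

def gridEntropy (μ : Measure UnitAddCircle) (N : ℕ) : ℝ :=
  partitionEntropy μ (cellIndex N) (Finset.range N)

-- Reversal makes the first letter of a word its most significant base-`m` digit, as in `valm`.
def wordEquiv (m n : ℕ) : (Fin n → Fin m) ≃ Fin (m ^ n) :=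
  (Equiv.arrowCongr Fin.revPerm (Equiv.refl _)).trans finFunctionFinEquiv

lemma valm_eq_wordEquiv_div {m n : ℕ} (hm : 0 < m) (w : Fin n → Fin m) :
    valm m n w = (wordEquiv m n w : ℕ) / (m : ℝ) ^ n := by
  have hm' : (0 : ℝ) < m := by exact_mod_cast hm
  rw [eq_div_iff (by positivity), valm, Finset.sum_mul, wordEquiv, Equiv.trans_apply,
    finFunctionFinEquiv_apply, ← Equiv.sum_comp Fin.revPerm]
  push_cast
  refine Finset.sum_congr rfl fun j _ => ?_
  simp only [Equiv.arrowCongr_apply, Fin.revPerm_apply, Equiv.refl_apply, Fin.revPerm_symm,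
    Function.comp_apply, Fin.val_rev]
  rw [div_mul_eq_mul_div, div_eq_iff (by positivity), mul_assoc, ← pow_add]
  congr 2
  omega

lemma ImT_eq_preimage_cellIndex {m n : ℕ} (hm : 0 < m) (w : Fin n → Fin m) :
    ImT m n w = cellIndex (m ^ n) ⁻¹' {(wordEquiv m n w : ℕ)} := by
  rw [← image_Ico_eq_preimage_cellIndex (wordEquiv m n w).2, ImT, valm_eq_wordEquiv_div hm,
    Nat.cast_pow, add_div, one_div]

lemma measHT_eq_gridEntropy (μ : Measure UnitAddCircle) {m : ℕ} (hm : 0 < m) (n : ℕ) :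
    measHT μ m n = gridEntropy μ (m ^ n) := by
  rw [measHT, gridEntropy, partitionEntropy, ← Fin.sum_univ_eq_sum_range]
  exact Fintype.sum_equiv (wordEquiv m n) _ _ fun w => by
    rw [ImT_eq_preimage_cellIndex hm, measureReal_def]

def normalizedGridEntropy (μ : Measure UnitAddCircle) (N : ℕ) : ℝ := gridEntropy μ N / log N

lemma measHT_div_eq_normalizedGridEntropy (μ : Measure UnitAddCircle) {m : ℕ} (hm : 0 < m) :
    (fun n : ℕ => measHT μ m n / (n * log m)) = fun n => normalizedGridEntropy μ (m ^ n) := by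
  funext n
  rw [measHT_eq_gridEntropy μ hm, normalizedGridEntropy, Nat.cast_pow, log_pow]

namespace Filter
variable {ι : Type*} {f : Filter ι} [f.NeBot] {u v : ι → ℝ}

lemma liminf_eq_of_tendsto_sub (hv : IsBoundedUnder (· ≤ ·) f v)
    (hv' : IsBoundedUnder (· ≥ ·) f v) (h : Tendsto (u - v) f (𝓝 0)) :
    liminf u f = liminf v f := by
  have hu : u = (u - v) + v := by simp
  rw [hu]
  refine le_antisymm ?_ ?_
  · have := liminf_add_le h.isBoundedUnder_ge h.isBoundedUnder_le hv' hv.isCoboundedUnder_ge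
    rwa [h.limsup_eq, zero_add] at this
  · have := le_liminf_add h.isBoundedUnder_ge h.isBoundedUnder_le hv' hv.isCoboundedUnder_ge
    rwa [h.liminf_eq, zero_add] at this

lemma limsup_eq_of_tendsto_sub (hv : IsBoundedUnder (· ≤ ·) f v)
    (hv' : IsBoundedUnder (· ≥ ·) f v) (h : Tendsto (u - v) f (𝓝 0)) :
    limsup u f = limsup v f := by
  have hu : u = v + (u - v) := by simp
  rw [hu]
  refine le_antisymm ?_ ?_
  · have := limsup_add_le hv' hv h.isBoundedUnder_ge.isCoboundedUnder_le h.isBoundedUnder_le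
    rwa [h.limsup_eq, add_zero] at this
  · have := le_limsup_add hv hv'.isCoboundedUnder_le h.isBoundedUnder_le h.isBoundedUnder_ge
    rwa [h.liminf_eq, add_zero] at this

end Filter

lemma Nat.map_log_atTop {b : ℕ} (hb : 1 < b) : map (Nat.log b) atTop = atTop := by
  refine le_antisymm (Nat.log_monotone.tendsto_atTop_atTop fun k => ⟨b ^ k, ?_⟩) fun s hs => ?_
  · rw [Nat.log_pow hb]
  · obtain ⟨a, ha⟩ := mem_atTop_sets.1 (mem_map.1 hs)
    refine mem_atTop_sets.2 ⟨a, fun k hk => ?_⟩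
    simpa [Nat.log_pow hb] using ha (b ^ k) (hk.trans (Nat.lt_pow_self hb).le)

lemma abs_div_sub_div_le {a b c d L ℓ : ℝ} (hab : |a - b| ≤ c) (hb : 0 ≤ b) (hbℓ : b ≤ ℓ)
    (hℓ : 0 < ℓ) (hℓL : ℓ ≤ L) (hLd : L ≤ ℓ + d) : |a / L - b / ℓ| ≤ (c + d) / L := by
  have hL : 0 < L := hℓ.trans_le hℓL
  have hratio : b / ℓ ≤ 1 := (div_le_one hℓ).2 hbℓ
  have hsplit : a / L - b / ℓ = ((a - b) - b / ℓ * (L - ℓ)) / L := by field_simp; ring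
  rw [hsplit, abs_div, abs_of_pos hL]
  refine div_le_div_of_nonneg_right ((abs_sub _ _).trans (add_le_add hab ?_)) hL.le
  rw [abs_of_nonneg (mul_nonneg (div_nonneg hb hℓ.le) (sub_nonneg.2 hℓL))]
  exact (mul_le_mul hratio (by linarith) (sub_nonneg.2 hℓL) zero_le_one).trans_eq (one_mul d)

section NormalizedGridEntropy

variable (μ : Measure UnitAddCircle) [IsProbabilityMeasure μ]

lemma gridEntropy_nonneg (N : ℕ) : 0 ≤ gridEntropy μ N :=
  partitionEntropy_nonneg μ _ _

lemma gridEntropy_le_log (N : ℕ) : gridEntropy μ N ≤ log N := by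
  rcases N.eq_zero_or_pos with rfl | hN
  · simp [gridEntropy, partitionEntropy]
  exact (partitionEntropy_le_log_card (measurable_cellIndex N)
    fun x => Finset.mem_range.2 (cellIndex_lt hN x)).trans_eq (by rw [Finset.card_range])

lemma gridEntropy_le_add_log {N M : ℕ} (hN : 0 < N) (hM : 0 < M) :
    gridEntropy μ M ≤ gridEntropy μ N + log ((M / N + 2 : ℕ) : ℝ) := by
  have h := partitionEntropy_le_add_mul_log (ν := μ) (C := M / N + 2) (measurable_cellIndex N)
    (measurable_cellIndex M) (fun x => Finset.mem_range.2 (cellIndex_lt hN x))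
    (fun x => Finset.mem_range.2 (cellIndex_lt hM x))
    fun j _ => ⟨_, by simp, fun x hx => hx ▸ cellIndex_mem_Ico hN M x⟩
  rwa [probReal_univ, one_mul] at h

lemma abs_gridEntropy_sub_le {m N : ℕ} (hm : 2 ≤ m) (hN : 0 < N) :
    |gridEntropy μ N - gridEntropy μ (m ^ Nat.log m N)| ≤ log ((m + 2 : ℕ) : ℝ) := by
  set n := Nat.log m N
  have hpow : 0 < m ^ n := by positivity
  have hlow : m ^ n ≤ N := Nat.pow_log_le_self m hN.ne'
  have hhigh : N < m ^ n * m := Nat.lt_pow_succ_log_self (by omega) N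
  have hlog {k : ℕ} (hk : k ≤ m) : log ((k + 2 : ℕ) : ℝ) ≤ log ((m + 2 : ℕ) : ℝ) :=
    log_le_log (by positivity) (by exact_mod_cast Nat.add_le_add_right hk 2)
  rw [abs_sub_le_iff]
  constructor
  · refine (sub_le_iff_le_add'.2 (gridEntropy_le_add_log μ hpow hN)).trans (hlog ?_)
    exact (Nat.div_lt_iff_lt_mul hpow).2 (by rwa [mul_comm]) |>.le
  · refine (sub_le_iff_le_add'.2 (gridEntropy_le_add_log μ hN hpow)).trans (hlog ?_)
    exact Nat.div_le_of_le_mul (hlow.trans (Nat.le_mul_of_pos_right N (by omega)))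

lemma normalizedGridEntropy_nonneg (N : ℕ) : 0 ≤ normalizedGridEntropy μ N :=
  div_nonneg (gridEntropy_nonneg μ N) (log_natCast_nonneg N)

lemma normalizedGridEntropy_le_one (N : ℕ) : normalizedGridEntropy μ N ≤ 1 :=
  div_le_one_of_le₀ (gridEntropy_le_log μ N) (log_natCast_nonneg N)

lemma abs_normalizedGridEntropy_sub_le {m N : ℕ} (hm : 2 ≤ m) (hN : m ≤ N) :
    |normalizedGridEntropy μ N - normalizedGridEntropy μ (m ^ Nat.log m N)| ≤
      (log ((m + 2 : ℕ) : ℝ) + log m) / log N := by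
  set n := Nat.log m N
  have hlow : ((m ^ n : ℕ) : ℝ) ≤ N := by exact_mod_cast Nat.pow_log_le_self m (by omega)
  have hhigh : (N : ℝ) < ((m ^ n : ℕ) : ℝ) * m := by
    exact_mod_cast Nat.lt_pow_succ_log_self (by omega) N
  have hpow : (1 : ℝ) < ((m ^ n : ℕ) : ℝ) := by
    exact_mod_cast Nat.one_lt_pow (Nat.log_pos (by omega) hN).ne' (by omega)
  refine abs_div_sub_div_le (abs_gridEntropy_sub_le μ hm (by omega)) (gridEntropy_nonneg μ _)
    (gridEntropy_le_log μ _) (log_pos hpow) (log_le_log (zero_lt_one.trans hpow) hlow) ?_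
  rw [← log_mul (zero_lt_one.trans hpow).ne' (by exact_mod_cast (by omega : m ≠ 0))]
  exact log_le_log (by exact_mod_cast (by omega : 0 < N)) hhigh.le

lemma tendsto_normalizedGridEntropy_sub {m : ℕ} (hm : 2 ≤ m) :
    Tendsto (normalizedGridEntropy μ - fun N => normalizedGridEntropy μ (m ^ Nat.log m N))
      atTop (𝓝 0) := by
  refine squeeze_zero_norm' ?_
    ((tendsto_const_nhds (x := log ((m + 2 : ℕ) : ℝ) + log m)).div_atTop
      (tendsto_log_atTop.comp tendsto_natCast_atTop_atTop))
  filter_upwards [eventually_ge_atTop m] with N hN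
  rw [Real.norm_eq_abs]
  exact abs_normalizedGridEntropy_sub_le μ hm hN

lemma renyiLower_eq_and_renyiUpper_eq {m : ℕ} (hm : 2 ≤ m) :
    renyiLower μ m = liminf (normalizedGridEntropy μ) atTop ∧
      renyiUpper μ m = limsup (normalizedGridEntropy μ) atTop := by
  have hle : IsBoundedUnder (· ≤ ·) atTop fun N => normalizedGridEntropy μ (m ^ Nat.log m N) :=
    isBoundedUnder_of ⟨1, fun N => normalizedGridEntropy_le_one μ _⟩
  have hge : IsBoundedUnder (· ≥ ·) atTop fun N => normalizedGridEntropy μ (m ^ Nat.log m N) :=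
    isBoundedUnder_of ⟨0, fun N => normalizedGridEntropy_nonneg μ _⟩
  have htendsto := tendsto_normalizedGridEntropy_sub μ hm
  have hmap : map (Nat.log m) atTop = atTop := Nat.map_log_atTop (by omega)
  rw [renyiLower, renyiUpper, measHT_div_eq_normalizedGridEntropy μ (by omega),
    liminf_eq_of_tendsto_sub hle hge htendsto, limsup_eq_of_tendsto_sub hle hge htendsto]
  set g := fun n => normalizedGridEntropy μ (m ^ n)
  exact ⟨((liminf_comp g (Nat.log m) atTop).trans (by rw [hmap])).symm,
    ((limsup_comp g (Nat.log m) atTop).trans (by rw [hmap])).symm⟩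

end NormalizedGridEntropy

/-- Rényi dimensions are independent of the partition factor. -/
theorem renyi_dimension_base_invariant
    (μ : Measure UnitAddCircle) (hμ : IsProbabilityMeasure μ)
    (m₁ m₂ : ℕ) (h1 : 2 ≤ m₁) (h2 : 2 ≤ m₂) :
    renyiLower μ m₁ = renyiLower μ m₂ ∧ renyiUpper μ m₁ = renyiUpper μ m₂ := by
  obtain ⟨hlower₁, hupper₁⟩ := renyiLower_eq_and_renyiUpper_eq μ h1
  obtain ⟨hlower₂, hupper₂⟩ := renyiLower_eq_and_renyiUpper_eq μ h2
  exact ⟨hlower₁.trans hlower₂.symm, hupper₁.trans hupper₂.symm⟩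
end
end
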